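/- arXiv:math/0703653 — 7 statements merged into one kernel-verified Lean document; each statement's English description precedes it below -/
import Mathlib

section
/- For all integers k ≥ 1 and n ≥ 2 and every tree T of order n, there exists a set S ⊆ V(T) with |S| ≤ 2^{k+2} − 6 such that every connected component of T − S has order at most 2^{−k}·n. -/
open Finset SimpleGraph

variable {n : ℕ} (T : SimpleGraph (Fin n))

/-- Reachability within a vertex set `A`. -/
def ReachIn (A : Finset (Fin n)) (x y : Fin n) : Prop :=
  ∃ w : T.Walk x y, ∀ z ∈ w.support, z ∈ A

/-- `A` is connected in `T` (as an induced subgraph, possibly empty). -/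
def Conn (A : Finset (Fin n)) : Prop :=
  ∀ x ∈ A, ∀ y ∈ A, ReachIn T A x y

open Classical in
/-- The component of `x` within vertex set `A`. -/
noncomputable def comp (A : Finset (Fin n)) (x : Fin n) : Finset (Fin n) :=
  A.filter (fun y => ReachIn T A x y)

variable {T}

lemma reach_mem_left {A : Finset (Fin n)} {x y : Fin n} (h : ReachIn T A x y) : x ∈ A := by
  obtain ⟨w, hw⟩ := h; exact hw x w.start_mem_support

lemma reach_mem_right {A : Finset (Fin n)} {x y : Fin n} (h : ReachIn T A x y) : y ∈ A := by
  obtain ⟨w, hw⟩ := h; exact hw y w.end_mem_support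

lemma reach_refl {A : Finset (Fin n)} {x : Fin n} (hx : x ∈ A) : ReachIn T A x x :=
  ⟨SimpleGraph.Walk.nil, by simpa using hx⟩

lemma reach_symm {A : Finset (Fin n)} {x y : Fin n} (h : ReachIn T A x y) : ReachIn T A y x := by
  obtain ⟨w, hw⟩ := h
  exact ⟨w.reverse, by intro z hz; rw [SimpleGraph.Walk.support_reverse] at hz
                       exact hw z (List.mem_reverse.mp hz)⟩

lemma reach_trans {A : Finset (Fin n)} {x y z : Fin n} (h : ReachIn T A x y)
    (h' : ReachIn T A y z) : ReachIn T A x z := by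
  obtain ⟨w, hw⟩ := h; obtain ⟨w', hw'⟩ := h'
  refine ⟨w.append w', ?_⟩
  intro u hu
  rcases (SimpleGraph.Walk.mem_support_append_iff _ _).mp hu with h | h
  · exact hw u h
  · exact hw' u h

lemma reach_mono {A B : Finset (Fin n)} {x y : Fin n} (hAB : A ⊆ B) (h : ReachIn T A x y) :
    ReachIn T B x y := by
  obtain ⟨w, hw⟩ := h; exact ⟨w, fun z hz => hAB (hw z hz)⟩

lemma mem_comp {A : Finset (Fin n)} {x y : Fin n} : y ∈ comp T A x ↔ ReachIn T A x y := by
  classical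
  simp only [comp, Finset.mem_filter]
  exact ⟨fun h => h.2, fun h => ⟨reach_mem_right h, h⟩⟩

lemma comp_subset {A : Finset (Fin n)} {x : Fin n} : comp T A x ⊆ A := by
  intro y hy; exact reach_mem_right (mem_comp.mp hy)

lemma mem_comp_self {A : Finset (Fin n)} {x : Fin n} (hx : x ∈ A) : x ∈ comp T A x :=
  mem_comp.mpr (reach_refl hx)

/-- A reachability witness can be taken with support inside the component. -/
lemma reach_comp {A : Finset (Fin n)} {x y : Fin n} (h : ReachIn T A x y) :
    ReachIn T (comp T A x) x y := by
  classical
  obtain ⟨w, hw⟩ := h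
  refine ⟨w, fun z hz => mem_comp.mpr ⟨w.takeUntil z hz, fun u hu => hw u (SimpleGraph.Walk.support_takeUntil_subset _ hz hu)⟩⟩

lemma comp_conn {A : Finset (Fin n)} {x : Fin n} : Conn T (comp T A x) := by
  intro y hy z hz
  exact reach_trans (reach_symm (reach_comp (mem_comp.mp hy))) (reach_comp (mem_comp.mp hz))

lemma comp_eq_of_mem {A : Finset (Fin n)} {x y : Fin n} (h : y ∈ comp T A x) :
    comp T A y = comp T A x := by
  ext z
  simp only [mem_comp] at *
  exact ⟨fun hz => reach_trans h hz, fun hz => reach_trans (reach_symm h) hz⟩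

lemma conn_subset_comp {A B : Finset (Fin n)} {y : Fin n} (hB : Conn T B) (hBA : B ⊆ A)
    (hy : y ∈ B) : B ⊆ comp T A y := by
  intro z hz
  exact mem_comp.mpr (reach_mono hBA (hB y hy z hz))

lemma comp_adj_closed {A : Finset (Fin n)} {b x y : Fin n} (hx : x ∈ comp T A b) (hy : y ∈ A)
    (hadj : T.Adj x y) : y ∈ comp T A b := by
  refine mem_comp.mpr (reach_trans (mem_comp.mp hx) ⟨SimpleGraph.Walk.cons hadj SimpleGraph.Walk.nil, ?_⟩)
  intro z hz
  simp only [SimpleGraph.Walk.support_cons, SimpleGraph.Walk.support_nil, List.mem_cons,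
    List.mem_singleton] at hz
  rcases hz with rfl | rfl | h
  · exact comp_subset hx
  · exact hy
  · exact absurd h List.not_mem_nil

/-- A walk from inside `C` to outside `C` crosses an edge of `C`'s boundary. -/
lemma walk_cross {x y : Fin n} (w : T.Walk x y) (C : Finset (Fin n)) (hx : x ∈ C) (hy : y ∉ C) :
    ∃ a ∈ C, ∃ b, b ∉ C ∧ T.Adj a b ∧ a ∈ w.support ∧ b ∈ w.support := by
  induction w with
  | nil => exact absurd hx hy
  | cons h p ih =>
    rename_i u v z
    by_cases hv : v ∈ C
    · obtain ⟨a, ha, b, hb, hadj, has, hbs⟩ := ih hv hy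
      exact ⟨a, ha, b, hb, hadj, by simp [has], by simp [hbs]⟩
    · exact ⟨u, hx, v, hv, h, by simp, by simp [SimpleGraph.Walk.start_mem_support]⟩

/-- In an acyclic graph, a vertex outside `A` has at most one neighbour in each component of `A`. -/
lemma nbr_unique (hT : T.IsAcyclic) {A : Finset (Fin n)} {x u₁ u₂ v : Fin n}
    (h1 : u₁ ∈ comp T A x) (h2 : u₂ ∈ comp T A x) (hv : v ∉ A)
    (a1 : T.Adj v u₁) (a2 : T.Adj v u₂) : u₁ = u₂ := by
  obtain ⟨w, hw⟩ := comp_conn u₁ h1 u₂ h2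
  have hvs : v ∉ (w.toPath : T.Walk u₁ u₂).support := by
    intro hmem
    exact hv (comp_subset (hw v (SimpleGraph.Walk.support_toPath_subset w hmem)))
  have hp : (SimpleGraph.Walk.cons a1 (w.toPath : T.Walk u₁ u₂)).IsPath :=
    (w.toPath.2).cons hvs
  have := SimpleGraph.isAcyclic_iff_path_unique.mp hT (SimpleGraph.Path.singleton a2) ⟨_, hp⟩
  have hsupp : u₁ ∈ (SimpleGraph.Path.singleton a2 : T.Walk v u₂).support := by
    rw [this]
    simp
  simp only [SimpleGraph.Path.singleton, SimpleGraph.Walk.support_cons,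
    SimpleGraph.Walk.support_nil, List.mem_cons, List.mem_singleton] at hsupp
  rcases hsupp with rfl | rfl | h
  · exact absurd (comp_subset h1) hv
  · rfl
  · exact absurd h List.not_mem_nil

/-- Centroid: a connected set `A` in a tree has a vertex whose removal halves all
connected subsets. -/
lemma centroid (hT : T.IsAcyclic) {A : Finset (Fin n)} (hA : Conn T A) (hne : A.Nonempty) :
    ∃ v ∈ A, ∀ B ⊆ A.erase v, Conn T B → 2 * B.card ≤ A.card := by
  classical
  set f : Fin n → ℕ := fun v => (A.erase v).sup (fun x => (comp T (A.erase v) x).card) with hf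
  obtain ⟨v, hvA, hmin⟩ := A.exists_min_image f hne
  refine ⟨v, hvA, ?_⟩
  intro B hB hBconn
  by_contra hbig
  push_neg at hbig
  have hBne : B.Nonempty := by
    rw [← Finset.card_pos]
    omega
  obtain ⟨b, hbB⟩ := hBne
  set A' := A.erase v with hA'
  set C := comp T A' b with hC
  have hbA' : b ∈ A' := hB hbB
  have hbA : b ∈ A := Finset.mem_of_mem_erase hbA'
  have hBC : B ⊆ C := conn_subset_comp hBconn hB hbB
  have hCA' : C ⊆ A' := comp_subset
  have hCA : C ⊆ A := hCA'.trans (Finset.erase_subset _ _)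
  have hCcard : A.card < 2 * C.card := lt_of_lt_of_le hbig
    (by have := Finset.card_le_card hBC; omega)
  have hbC : b ∈ C := mem_comp_self hbA'
  have hvC : v ∉ C := fun h => (Finset.mem_erase.mp (hCA' h)).1 rfl
  have hvA' : v ∉ A' := fun h => (Finset.mem_erase.mp h).1 rfl
  -- find the unique neighbour u of v inside C
  obtain ⟨w, hw⟩ := hA b hbA v hvA
  obtain ⟨u, huC, y, hyC, hadj, hus, hys⟩ := walk_cross w C hbC hvC
  have hyv : y = v := by
    by_contra hyv
    exact hyC (comp_adj_closed huC (Finset.mem_erase.mpr ⟨hyv, hw y hys⟩) hadj)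
  rw [hyv] at hadj
  have huA' : u ∈ A' := hCA' huC
  have huA : u ∈ A := hCA huC
  -- every component of A.erase u is small
  have hCpos : 0 < C.card := Finset.card_pos.mpr ⟨b, hbC⟩
  have key : f u < C.card := by
    rw [hf]
    simp only
    rw [Finset.sup_lt_iff hCpos]
    intro x hx
    set D := comp T (A.erase u) x with hD
    have hDsub : D ⊆ A.erase u := comp_subset
    have hDconn : Conn T D := comp_conn
    have hDAC : (∀ d ∈ D, d ∉ C) → D.card < C.card := by
      intro hdis
      have : D ⊆ A \ C := by
        intro d hd
        exact Finset.mem_sdiff.mpr ⟨Finset.mem_of_mem_erase (hDsub hd), hdis d hd⟩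
      have h1 : D.card ≤ A.card - C.card := by
        have := Finset.card_le_card this
        rwa [Finset.card_sdiff_of_subset hCA] at this
      omega
    by_cases hvD : v ∈ D
    · refine hDAC ?_
      intro d hd hdC
      obtain ⟨w', hw'⟩ := hDconn d hd v hvD
      obtain ⟨a, haC, y', hy'C, hadj', has, hy's⟩ := walk_cross w' C hdC hvC
      have hy'v : y' = v := by
        by_contra hy'v
        refine hy'C (comp_adj_closed haC (Finset.mem_erase.mpr ⟨hy'v, ?_⟩) hadj')
        exact Finset.mem_of_mem_erase (hDsub (hw' y' hy's))
      rw [hy'v] at hadj'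
      have hau : a = u := nbr_unique hT haC huC hvA' hadj'.symm hadj.symm
      exact (Finset.mem_erase.mp (hDsub (hw' a has))).1 hau
    · by_cases hDC : ∃ d ∈ D, d ∈ C
      · obtain ⟨d, hdD, hdC⟩ := hDC
        have hDA' : D ⊆ A' := by
          intro z hz
          refine Finset.mem_erase.mpr ⟨fun h => hvD (h ▸ hz), Finset.mem_of_mem_erase (hDsub hz)⟩
        have hDCsub : D ⊆ C := by
          have := conn_subset_comp hDconn hDA' hdD
          rwa [comp_eq_of_mem hdC] at this
        have hDe : D ⊆ C.erase u := by
          intro z hz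
          exact Finset.mem_erase.mpr ⟨(Finset.mem_erase.mp (hDsub hz)).1, hDCsub hz⟩
        have := Finset.card_le_card hDe
        rw [Finset.card_erase_of_mem huC] at this
        omega
      · push_neg at hDC
        exact hDAC hDC
  have hfv : C.card ≤ f v :=
    Finset.le_sup (f := fun x => (comp T (A.erase v) x).card) hbA'
  have := hmin u huA
  omega

lemma arith_step (t a s : ℝ) (b : ℕ) (ht : 0 < t) (hta : t < a) (hsa : s ≤ a - 1)
    (hb1 : b = 1 → 2 * s ≤ a) (hb0 : b = 0 → s = 0) :
    1 + (2 * s / t - b) ≤ 2 * a / t - 1 := by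
  match b with
  | 0 =>
    rw [hb0 rfl]
    have h2 : (2 : ℝ) ≤ 2 * a / t := by
      rw [le_div_iff₀ ht]; nlinarith
    push_cast
    rw [mul_zero, zero_div]
    linarith
  | 1 =>
    have h1 : 2 * s ≤ 2 * a - t := by have := hb1 rfl; linarith
    have h2 : 2 * s / t ≤ (2 * a - t) / t := by
      exact div_le_div_of_nonneg_right h1 ht.le |>.trans_eq rfl
    have h3 : (2 * a - t) / t = 2 * a / t - 1 := by
      field_simp
    push_cast
    linarith
  | (b + 2) =>
    have h2 : 2 * s / t ≤ 2 * a / t := by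
      apply div_le_div_of_nonneg_right ?_ ht.le |>.trans_eq rfl
      linarith
    have : (2 : ℝ) ≤ ((b + 2 : ℕ) : ℝ) := by push_cast; linarith [Nat.cast_nonneg (α := ℝ) b]
    linarith

lemma main_lemma (hT : T.IsAcyclic) :
    ∀ m : ℕ, ∀ A : Finset (Fin n), A.card ≤ m → Conn T A → ∀ t : ℝ, 0 < t →
    ∃ S : Finset (Fin n), S ⊆ A ∧ ((A.card : ℝ) ≤ t → S = ∅) ∧
      ((S.card : ℝ) ≤ max 0 (2 * A.card / t - 1)) ∧
      ∀ B ⊆ A \ S, Conn T B → (B.card : ℝ) ≤ t := by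
  intro m
  induction m with
  | zero =>
    intro A hA _ t ht
    refine ⟨∅, Finset.empty_subset _, fun _ => rfl, by simp, ?_⟩
    intro B hB _
    have hA0 : A = ∅ := Finset.card_eq_zero.mp (Nat.le_zero.mp hA)
    have : B = ∅ := Finset.subset_empty.mp (by simpa [hA0] using hB)
    simp [this, ht.le]
  | succ m IH =>
    intro A hAm hA t ht
    by_cases hsmall : (A.card : ℝ) ≤ t
    · refine ⟨∅, Finset.empty_subset _, fun _ => rfl, by simp, ?_⟩
      intro B hB _
      rw [Finset.sdiff_empty] at hB
      exact le_trans (by exact_mod_cast Nat.cast_le.mpr (Finset.card_le_card hB)) hsmall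
    · classical
      push_neg at hsmall
      have hApos : 0 < A.card := by
        by_contra h
        push_neg at h
        have h0 : A.card = 0 := Nat.le_zero.mp h
        rw [h0] at hsmall
        simp at hsmall
        linarith
      have hAne : A.Nonempty := Finset.card_pos.mp hApos
      obtain ⟨v, hvA, hcent⟩ := centroid hT hA hAne
      set A' := A.erase v with hA'def
      have hA'card : A'.card = A.card - 1 := Finset.card_erase_of_mem hvA
      have hA'm : A'.card ≤ m := by omega
      set P := A'.image (fun x => comp T A' x) with hPdef
      have hPsub : ∀ C ∈ P, C ⊆ A' := by
        intro C hC
        obtain ⟨x, _, rfl⟩ := Finset.mem_image.mp hC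
        exact comp_subset
      have hPconn : ∀ C ∈ P, Conn T C := by
        intro C hC
        obtain ⟨x, _, rfl⟩ := Finset.mem_image.mp hC
        exact comp_conn
      have hhalf : ∀ C ∈ P, 2 * C.card ≤ A.card := fun C hC =>
        hcent C (hPsub C hC) (hPconn C hC)
      have hPrec : ∀ C ∈ P, ∃ S_C, S_C ⊆ C ∧ ((C.card : ℝ) ≤ t → S_C = ∅) ∧
          ((S_C.card : ℝ) ≤ max 0 (2 * C.card / t - 1)) ∧
          ∀ B ⊆ C \ S_C, Conn T B → (B.card : ℝ) ≤ t := by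
        intro C hC
        exact IH C (le_trans (Finset.card_le_card (hPsub C hC)) hA'm) (hPconn C hC) t ht
      choose g hg1 hg2 hg3 hg4 using hPrec
      set S : Finset (Fin n) := insert v (P.attach.biUnion fun C => g C.1 C.2) with hSdef
      have hgS : ∀ C (hC : C ∈ P), g C hC ⊆ S := by
        intro C hC z hz
        exact Finset.mem_insert_of_mem (Finset.mem_biUnion.mpr ⟨⟨C, hC⟩, Finset.mem_attach _ _, hz⟩)
      have hSA : S ⊆ A := by
        intro z hz
        rcases Finset.mem_insert.mp hz with rfl | hz
        · exact hvA
        · obtain ⟨⟨C, hC⟩, _, hzC⟩ := Finset.mem_biUnion.mp hz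
          exact Finset.mem_of_mem_erase (hPsub C hC (hg1 C hC hzC))
      -- coverage
      have hcover : ∀ B ⊆ A \ S, Conn T B → (B.card : ℝ) ≤ t := by
        intro B hB hBconn
        rcases B.eq_empty_or_nonempty with rfl | ⟨b, hbB⟩
        · simp [ht.le]
        · have hBsub : ∀ z ∈ B, z ∈ A ∧ z ∉ S := fun z hz => Finset.mem_sdiff.mp (hB hz)
          have hBA' : B ⊆ A' := by
            intro z hz
            obtain ⟨hzA, hzS⟩ := hBsub z hz
            exact Finset.mem_erase.mpr ⟨fun h => hzS (h ▸ Finset.mem_insert_self v _), hzA⟩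
          have hbA' : b ∈ A' := hBA' hbB
          have hCP : comp T A' b ∈ P := Finset.mem_image_of_mem _ hbA'
          have hBC : B ⊆ comp T A' b := conn_subset_comp hBconn hBA' hbB
          refine hg4 _ hCP B ?_ hBconn
          intro z hz
          exact Finset.mem_sdiff.mpr ⟨hBC hz, fun h => (hBsub z hz).2 (hgS _ hCP h)⟩
      -- cardinality
      set Pb := P.filter (fun C => t < ((C.card : ℕ) : ℝ)) with hPbdef
      have hdisj : ∀ C₁ ∈ P, ∀ C₂ ∈ P, C₁ ≠ C₂ → Disjoint C₁ C₂ := by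
        intro C₁ hC₁ C₂ hC₂ hne
        rw [Finset.disjoint_left]
        intro z hz1 hz2
        obtain ⟨x, _, rfl⟩ := Finset.mem_image.mp hC₁
        obtain ⟨y, _, rfl⟩ := Finset.mem_image.mp hC₂
        exact hne ((comp_eq_of_mem hz1).symm.trans (comp_eq_of_mem hz2))
      have hPsum : ∑ C ∈ P, C.card = A'.card := by
        rw [← Finset.card_biUnion hdisj]
        congr 1
        apply Finset.Subset.antisymm
        · intro z hz
          obtain ⟨C, hC, hzC⟩ := Finset.mem_biUnion.mp hz
          exact hPsub C hC hzC
        · intro z hz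
          exact Finset.mem_biUnion.mpr ⟨comp T A' z, Finset.mem_image_of_mem _ hz, mem_comp_self hz⟩
      have hPbsum : ∑ C ∈ Pb, C.card ≤ A.card - 1 := by
        rw [← hA'card, ← hPsum]
        exact Finset.sum_le_sum_of_subset (Finset.filter_subset _ _)
      -- per-term bound
      have hterm : ∀ C (hC : C ∈ P), ((g C hC).card : ℝ) ≤
          if t < ((C.card : ℕ) : ℝ) then 2 * C.card / t - 1 else 0 := by
        intro C hC
        by_cases hbig : t < ((C.card : ℕ) : ℝ)
        · rw [if_pos hbig]
          refine le_trans (hg3 C hC) (le_of_eq (max_eq_right ?_))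
          have h2 : (2 : ℝ) ≤ 2 * C.card / t := by
            rw [le_div_iff₀ ht]; nlinarith
          linarith
        · rw [if_neg hbig, hg2 C hC (le_of_not_gt hbig)]
          simp
      have hcard1 : S.card ≤ 1 + ∑ C ∈ P.attach, (g C.1 C.2).card := by
        refine le_trans (Finset.card_insert_le _ _) ?_
        rw [Nat.add_comm]
        exact Nat.add_le_add_left (Finset.card_biUnion_le) 1
      have hsum2 : ((∑ C ∈ P.attach, (g C.1 C.2).card : ℕ) : ℝ) ≤
          ∑ C ∈ Pb, (2 * (C.card : ℝ) / t - 1) := by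
        push_cast
        calc ∑ C ∈ P.attach, ((g C.1 C.2).card : ℝ)
            ≤ ∑ C ∈ P.attach, (if t < ((C.1.card : ℕ) : ℝ) then 2 * C.1.card / t - 1 else 0) :=
              Finset.sum_le_sum (fun C _ => hterm C.1 C.2)
          _ = ∑ C ∈ P, (if t < ((C.card : ℕ) : ℝ) then 2 * (C.card : ℝ) / t - 1 else 0) :=
              Finset.sum_attach P (fun C => if t < ((C.card : ℕ) : ℝ) then 2 * (C.card : ℝ) / t - 1 else 0)
          _ = ∑ C ∈ Pb, (2 * (C.card : ℝ) / t - 1) := by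
              rw [hPbdef, Finset.sum_filter]
      have hsplit : ∑ C ∈ Pb, (2 * (C.card : ℝ) / t - 1) =
          2 * (∑ C ∈ Pb, (C.card : ℝ)) / t - Pb.card := by
        rw [Finset.sum_sub_distrib, Finset.sum_const, nsmul_eq_mul, mul_one, Finset.mul_sum,
          Finset.sum_div]
      -- final card bound
      have hfinal : (S.card : ℝ) ≤ 2 * A.card / t - 1 := by
        have hs : (∑ C ∈ Pb, (C.card : ℝ)) ≤ (A.card : ℝ) - 1 := by
          have h1 : ((∑ C ∈ Pb, C.card : ℕ) : ℝ) ≤ ((A.card - 1 : ℕ) : ℝ) :=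
            Nat.cast_le.mpr hPbsum
          rw [Nat.cast_sum, Nat.cast_sub hApos] at h1
          simpa using h1
        have hb1 : Pb.card = 1 → 2 * (∑ C ∈ Pb, (C.card : ℝ)) ≤ (A.card : ℝ) := by
          intro h1
          obtain ⟨C₀, hC₀⟩ := Finset.card_eq_one.mp h1
          rw [hC₀, Finset.sum_singleton]
          have hC₀P : C₀ ∈ P := Finset.mem_of_mem_filter C₀ (hC₀ ▸ Finset.mem_singleton_self C₀)
          exact_mod_cast Nat.cast_le.mpr (hhalf C₀ hC₀P)
        have hb0 : Pb.card = 0 → (∑ C ∈ Pb, (C.card : ℝ)) = 0 := by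
          intro h0
          rw [Finset.card_eq_zero.mp h0, Finset.sum_empty]
        calc (S.card : ℝ) ≤ ((1 + ∑ C ∈ P.attach, (g C.1 C.2).card : ℕ) : ℝ) := by
              exact_mod_cast Nat.cast_le.mpr hcard1
          _ = 1 + ((∑ C ∈ P.attach, (g C.1 C.2).card : ℕ) : ℝ) := by push_cast; ring
          _ ≤ 1 + (2 * (∑ C ∈ Pb, (C.card : ℝ)) / t - Pb.card) := by
              rw [← hsplit]; linarith [hsum2]
          _ ≤ 2 * A.card / t - 1 :=
              arith_step t A.card _ Pb.card ht hsmall hs hb1 hb0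
      exact ⟨S, hSA, fun h => absurd h (not_le.mpr hsmall), hfinal.trans (le_max_right _ _), hcover⟩

lemma bridge (S : Finset (Fin n))
    (c : (T.induce ((↑S : Set (Fin n))ᶜ)).ConnectedComponent) :
    ∃ B : Finset (Fin n), B ⊆ Finset.univ \ S ∧ Conn T B ∧ (c.supp.ncard : ℝ) = B.card := by
  classical
  have hfin : (Subtype.val '' c.supp : Set (Fin n)).Finite := Set.toFinite _
  refine ⟨hfin.toFinset, ?_, ?_, ?_⟩
  · intro z hz
    rw [Set.Finite.mem_toFinset] at hz
    obtain ⟨z', hz', rfl⟩ := hz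
    refine Finset.mem_sdiff.mpr ⟨Finset.mem_univ _, ?_⟩
    have h2 := z'.2
    simp only [Set.mem_compl_iff, Finset.mem_coe] at h2
    exact h2
  · -- connectivity
    intro x hx y hy
    rw [Set.Finite.mem_toFinset] at hx hy
    obtain ⟨x', hx', rfl⟩ := hx
    obtain ⟨y', hy', rfl⟩ := hy
    rw [SimpleGraph.ConnectedComponent.mem_supp_iff] at hx' hy'
    have hreach : (T.induce ((↑S : Set (Fin n))ᶜ)).Reachable x' y' := SimpleGraph.ConnectedComponent.exact (hx'.trans hy'.symm)
    obtain ⟨w⟩ := hreach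
    have hwsupp : ∀ z' ∈ w.support, z' ∈ c.supp := by
      intro z' hz'
      rw [SimpleGraph.ConnectedComponent.mem_supp_iff]
      have : (T.induce ((↑S : Set (Fin n))ᶜ)).Reachable x' z' := (w.takeUntil z' hz').reachable
      rw [← hx']
      exact (SimpleGraph.ConnectedComponent.sound this).symm
    let hom : T.induce ((↑S : Set (Fin n))ᶜ) →g T := ⟨Subtype.val, fun {a b} h => h⟩
    refine ⟨w.map hom, ?_⟩
    intro z hz
    rw [SimpleGraph.Walk.support_map, List.mem_map] at hz
    obtain ⟨z', hz', rfl⟩ := hz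
    rw [Set.Finite.mem_toFinset]
    exact ⟨z', hwsupp z' hz', rfl⟩
  · have h1 : (Subtype.val '' c.supp).ncard = c.supp.ncard :=
      Set.ncard_image_of_injective _ Subtype.val_injective
    have h2 : (Subtype.val '' c.supp).ncard = hfin.toFinset.card :=
      Set.ncard_eq_toFinset_card _ hfin
    exact_mod_cast h1.symm.trans h2

theorem stmt5 (k n : ℕ) (hk : 1 ≤ k) (hn : 2 ≤ n)
    (T : SimpleGraph (Fin n)) (hT : T.IsTree) :
    ∃ S : Finset (Fin n), S.card ≤ 2 ^ (k + 2) - 6 ∧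
      ∀ c : (T.induce ((↑S : Set (Fin n))ᶜ)).ConnectedComponent,
        (c.supp.ncard : ℝ) ≤ (n : ℝ) / 2 ^ k := by
  have hconn : Conn T Finset.univ := by
    intro x _ y _
    obtain ⟨w⟩ := hT.isConnected.preconnected x y
    exact ⟨w, fun z _ => Finset.mem_univ z⟩
  have hNe : Nonempty (Fin n) := ⟨⟨0, by omega⟩⟩
  have hucard : (Finset.univ : Finset (Fin n)).card = n := by simp
  have hn0 : (0 : ℝ) < (n : ℝ) := by
    have : 0 < n := by omega
    exact_mod_cast this
  by_cases hk1 : k = 1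
  · subst hk1
    obtain ⟨v, _, hcent⟩ := centroid hT.IsAcyclic hconn Finset.univ_nonempty
    refine ⟨{v}, by norm_num, ?_⟩
    intro c
    obtain ⟨B, hB1, hB2, hB3⟩ := bridge {v} c
    rw [hB3]
    rw [Finset.sdiff_singleton_eq_erase] at hB1
    have := hcent B hB1 hB2
    rw [hucard] at this
    have hcast : 2 * (B.card : ℝ) ≤ (n : ℝ) := by exact_mod_cast this
    rw [pow_one]
    linarith
  · have hk2 : 2 ≤ k := by omega
    set t : ℝ := (n : ℝ) / 2 ^ k with htdef
    have ht : 0 < t := by positivity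
    obtain ⟨S, _, _, hS3, hS4⟩ :=
      main_lemma hT.IsAcyclic n Finset.univ (le_of_eq hucard) hconn t ht
    have hval : 2 * ((Finset.univ : Finset (Fin n)).card : ℝ) / t - 1 = 2 * 2 ^ k - 1 := by
      rw [hucard, htdef]
      field_simp
    have hmax : max 0 (2 * ((Finset.univ : Finset (Fin n)).card : ℝ) / t - 1)
        = 2 * 2 ^ k - 1 := by
      rw [hval]
      apply max_eq_right
      have : (1 : ℝ) ≤ 2 ^ k := one_le_pow₀ (by norm_num)
      linarith
    rw [hmax] at hS3
    have hS3' : (S.card : ℝ) ≤ ((2 ^ (k + 1) - 1 : ℕ) : ℝ) := by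
      have h1 : (1 : ℕ) ≤ 2 ^ (k + 1) := Nat.one_le_two_pow
      rw [Nat.cast_sub h1]
      push_cast
      rw [pow_succ]
      linarith
    have hScard : S.card ≤ 2 ^ (k + 1) - 1 := by exact_mod_cast hS3'
    have h8 : 8 ≤ 2 ^ (k + 1) := by
      calc (8 : ℕ) = 2 ^ 3 := by norm_num
        _ ≤ 2 ^ (k + 1) := Nat.pow_le_pow_right (by norm_num) (by omega)
    have hpow : 2 ^ (k + 2) = 2 * 2 ^ (k + 1) := by ring
    refine ⟨S, by omega, ?_⟩
    intro c
    obtain ⟨B, hB1, hB2, hB3⟩ := bridge S c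
    rw [hB3]
    exact hS4 B hB1 hB2
end

section
/- Let q ≥ 1 and k ≥ 1 be integers and 0 < γ < 1 a real. For every real η > 0 there exists an integer n₀ such that the following holds: if G is a graph of order n ≥ n₀ with maximum degree Δ(G) ≤ q that is (γ,η)-splittable, then the k-th power G^k is (γ/2, η)-splittable; moreover Δ(G^k) ≤ q^k, so G^k is q^k-degenerate. -/
/-- `G` is `q`-degenerate: every (induced) subgraph has a vertex of degree at most `q`. -/
def Degenerate {α : Type*} (G : SimpleGraph α) (q : ℕ) : Prop :=
  ∀ W : Finset α, W.Nonempty → ∃ v ∈ W, ({u ∈ (↑W : Set α) | G.Adj v u}).ncard ≤ q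

/-- `G` (of order `n`) is `(γ, η)`-splittable: one can delete a set `S` of fewer than
`n ^ (1 - γ)` vertices so that every connected component of `G - S` has order at most `η * n`. -/
def Splittable {α : Type*} [Fintype α] (G : SimpleGraph α) (γ η : ℝ) : Prop :=
  ∃ S : Finset α, (S.card : ℝ) < (Fintype.card α : ℝ) ^ ((1 : ℝ) - γ) ∧
    ∀ c : (G.induce ((↑S : Set α)ᶜ)).ConnectedComponent,
      (c.supp.ncard : ℝ) ≤ η * (Fintype.card α : ℝ)

/-- The `k`-th power of a graph: `u ~ v` iff `u ≠ v` and they are joined in `G`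
by a path of length at most `k`. -/
def graphPow {α : Type*} (G : SimpleGraph α) (k : ℕ) : SimpleGraph α :=
  SimpleGraph.fromRel (fun u v => ∃ w : G.Walk u v, w.IsPath ∧ w.length ≤ k)

open SimpleGraph

section aux

variable {V : Type*} {G : SimpleGraph V} {u v : V}

private lemma support_get (w : G.Walk u v) : ∀ (i : ℕ) (h : i < w.support.length),
    w.support.get ⟨i, h⟩ = w.getVert i := by
  induction w with
  | nil =>
    intro i h
    simp only [Walk.support_nil, List.length_singleton] at h
    interval_cases i
    rfl
  | cons hadj p ih =>
    intro i h
    cases i with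
    | zero => simp [Walk.support_cons]
    | succ i =>
      simp only [Walk.support_cons, List.get_cons_succ, Walk.getVert_cons_succ]
      exact ih i (by simpa [Walk.support_cons, Walk.length_support] using h)

private lemma getVert_injOn' {w : G.Walk u v} (hw : w.IsPath) {i j : ℕ}
    (hi : i ≤ w.length) (hj : j ≤ w.length) (h : w.getVert i = w.getVert j) : i = j := by
  have hi' : i < w.support.length := by rw [Walk.length_support]; omega
  have hj' : j < w.support.length := by rw [Walk.length_support]; omega
  have hnd := hw.support_nodup
  have h2 : w.support.get ⟨i, hi'⟩ = w.support.get ⟨j, hj'⟩ := by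
    rw [support_get, support_get]; exact h
  exact Fin.mk.inj_iff.mp ((List.Nodup.get_inj_iff hnd).mp h2)

end aux

section gfun

variable {V : Type*} {G : SimpleGraph V} {v : V}

/-- The "padded path" function: follow the path `p`, then bounce on its last edge. -/
private def gfun {u : V} (p : G.Walk v u) (i : ℕ) : V :=
  if i < p.length then p.getVert i
  else if (i - p.length) % 2 = 0 then u else p.getVert (p.length - 1)

private lemma gfun_of_le {u : V} (p : G.Walk v u) {i : ℕ} (hi : i ≤ p.length) :
    gfun p i = p.getVert i := by
  unfold gfun
  rcases lt_or_eq_of_le hi with h | h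
  · rw [if_pos h]
  · subst h; simp

private lemma gfun_adj {u : V} (p : G.Walk v u) (hd : 1 ≤ p.length) (i : ℕ) :
    G.Adj (gfun p i) (gfun p (i+1)) := by
  have hlast : G.Adj (p.getVert (p.length - 1)) u := by
    have := p.adj_getVert_succ (i := p.length - 1) (by omega)
    rwa [show p.length - 1 + 1 = p.length by omega, p.getVert_length] at this
  rcases lt_or_ge (i+1) p.length with h | h
  · rw [gfun_of_le p (by omega), gfun_of_le p (by omega)]
    exact p.adj_getVert_succ (by omega)
  rcases lt_or_ge i p.length with h2 | h2
  · -- i + 1 = p.length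
    have hi1 : i + 1 = p.length := by omega
    rw [gfun_of_le p (by omega), gfun_of_le p (by omega), hi1, p.getVert_length]
    have := p.adj_getVert_succ (i := i) (by omega)
    rwa [hi1, p.getVert_length] at this
  · -- both in the bouncing zone
    have g1 : gfun p i = if (i - p.length) % 2 = 0 then u else p.getVert (p.length - 1) := by
      unfold gfun; rw [if_neg (by omega)]
    have g2 : gfun p (i+1) =
        if ((i+1) - p.length) % 2 = 0 then u else p.getVert (p.length - 1) := by
      unfold gfun; rw [if_neg (by omega)]
    rw [g1, g2]
    rcases Nat.even_or_odd (i - p.length) with he | ho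
    · have hm1 : (i - p.length) % 2 = 0 := Nat.even_iff.mp he
      have hm2 : ((i+1) - p.length) % 2 = 1 := by omega
      rw [if_pos hm1, if_neg (by omega)]
      exact hlast.symm
    · have hm1 : (i - p.length) % 2 = 1 := Nat.odd_iff.mp ho
      have hm2 : ((i+1) - p.length) % 2 = 0 := by omega
      rw [if_neg (by omega), if_pos hm2]
      exact hlast

private lemma gfun_inj_aux {u1 u2 : V} (p1 : G.Walk v u1) (p2 : G.Walk v u2)
    (hp2 : p2.IsPath) (h1 : 1 ≤ p1.length)
    (hlt : p1.length < p2.length) {k : ℕ} (hk2 : p2.length ≤ k)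
    (heq : ∀ i ≤ k, gfun p1 i = gfun p2 i) : False := by
  set d1 := p1.length with hd1
  set d2 := p2.length with hd2
  rcases lt_or_ge (d1 + 1) d2 with hcase | hcase
  · -- d1 + 2 ≤ d2 : positions d1 and d1+2 both give u1 on the left, distinct on the right
    have e1 : gfun p1 d1 = u1 := by rw [gfun_of_le p1 le_rfl, p1.getVert_length]
    have e2 : gfun p1 (d1+2) = u1 := by
      unfold gfun; rw [if_neg (by omega)]; rw [if_pos (by omega)]
    have f1 : gfun p2 d1 = p2.getVert d1 := gfun_of_le p2 (by omega)
    have f2 : gfun p2 (d1+2) = p2.getVert (d1+2) := gfun_of_le p2 (by omega)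
    have : p2.getVert d1 = p2.getVert (d1+2) := by
      rw [← f1, ← f2, ← heq d1 (by omega), ← heq (d1+2) (by omega), e1, e2]
    have := getVert_injOn' hp2 (by omega) (by omega) this
    omega
  · -- d2 = d1 + 1
    have hd : d2 = d1 + 1 := by omega
    -- position d2 : left gives p1.getVert (d1 - 1), right gives u2
    have e1 : gfun p1 d2 = p1.getVert (d1 - 1) := by
      unfold gfun
      rw [if_neg (by omega), if_neg (by omega)]
    have e2 : gfun p2 d2 = p2.getVert d2 := by
      rw [gfun_of_le p2 le_rfl]
    -- position d1 - 1 : both still on their paths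
    have f1 : gfun p1 (d1-1) = p1.getVert (d1-1) := gfun_of_le p1 (by omega)
    have f2 : gfun p2 (d1-1) = p2.getVert (d1-1) := gfun_of_le p2 (by omega)
    have key : p2.getVert (d1-1) = p2.getVert d2 := by
      rw [← f2, ← e2, ← heq (d1-1) (by omega), ← heq d2 (by omega), e1, f1]
    have := getVert_injOn' hp2 (by omega) (by omega) key
    omega

end gfun

section counting

variable {V : Type*} [Fintype V] [DecidableEq V]

/-- Finset of neighbours. -/
private noncomputable def nbrF (G : SimpleGraph V) (v : V) : Finset V :=
  (Set.toFinite (G.neighborSet v)).toFinset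

/-- Finset of adjacency chains (as vertex lists) of length `k+1` starting at `v`. -/
private noncomputable def chains (G : SimpleGraph V) : ℕ → V → Finset (List V)
  | 0, v => {[v]}
  | (k+1), v => (nbrF G v).biUnion (fun w => ((chains G k w).image (v :: ·)))

private lemma card_chains_le {G : SimpleGraph V} {q : ℕ}
    (hdeg : ∀ v, (G.neighborSet v).ncard ≤ q) :
    ∀ (k : ℕ) (v : V), (chains G k v).card ≤ q ^ k := by
  intro k
  induction k with
  | zero => intro v; simp [chains]
  | succ k ih =>
    intro v
    calc (chains G (k+1) v).card
        ≤ ∑ w ∈ nbrF G v, ((chains G k w).image (v :: ·)).card :=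
          Finset.card_biUnion_le
      _ ≤ ∑ w ∈ nbrF G v, q ^ k := by
          refine Finset.sum_le_sum fun w _ => ?_
          exact le_trans Finset.card_image_le (ih w)
      _ = (nbrF G v).card * q ^ k := by rw [Finset.sum_const, smul_eq_mul]
      _ ≤ q * q ^ k := by
          have : (nbrF G v).card = (G.neighborSet v).ncard :=
            (Set.ncard_eq_toFinset_card _ (Set.toFinite _)).symm
          exact Nat.mul_le_mul_right _ (by rw [this]; exact hdeg v)
      _ = q ^ (k+1) := (pow_succ' q k).symm

private lemma mem_chains {G : SimpleGraph V} :
    ∀ (k : ℕ) (v : V) (l : List V), l.length = k + 1 → l.head? = some v →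
      l.Chain' G.Adj → l ∈ chains G k v := by
  intro k
  induction k with
  | zero =>
    intro v l hl hh _
    match l, hl with
    | [a], _ =>
      simp only [List.head?_cons, Option.some.injEq] at hh
      subst hh; simp [chains]
  | succ k ih =>
    intro v l hl hh hc
    match l, hl with
    | a :: b :: t, hl =>
      simp only [List.head?_cons, Option.some.injEq] at hh
      subst hh
      change List.IsChain G.Adj (a :: b :: t) at hc
      rw [List.isChain_cons_cons] at hc
      have hmem : (b :: t) ∈ chains G k b :=
        ih b (b :: t) (by simpa using hl) rfl hc.2
      simp only [chains, Finset.mem_biUnion]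
      refine ⟨b, ?_, Finset.mem_image_of_mem _ hmem⟩
      simp [nbrF, hc.1]

private lemma reach_ncard_le {G : SimpleGraph V} {q k : ℕ}
    (hdeg : ∀ v, (G.neighborSet v).ncard ≤ q) (v : V) :
    {u | u ≠ v ∧ ∃ w : G.Walk v u, w.length ≤ k}.ncard ≤ q ^ k := by
  classical
  set R := {u | u ≠ v ∧ ∃ w : G.Walk v u, w.length ≤ k} with hR
  set f : V → List V := fun u =>
    if h : ∃ p : G.Walk v u, p.IsPath ∧ p.length ≤ k then
      (List.range (k+1)).map (gfun h.choose)
    else [] with hf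
  have hfacts : ∀ u ∈ (Set.toFinite R).toFinset,
      ∃ (p : G.Walk v u), p.IsPath ∧ 1 ≤ p.length ∧ p.length ≤ k ∧
        f u = (List.range (k+1)).map (gfun p) := by
    intro u hu
    rw [Set.Finite.mem_toFinset] at hu
    obtain ⟨hne, w, hw⟩ := hu
    have h : ∃ p : G.Walk v u, p.IsPath ∧ p.length ≤ k :=
      ⟨w.bypass, w.bypass_isPath, le_trans w.length_bypass_le hw⟩
    refine ⟨h.choose, h.choose_spec.1, ?_, h.choose_spec.2, by rw [hf]; simp [h]⟩
    by_contra hc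
    have : h.choose.length = 0 := by omega
    exact hne (Walk.eq_of_length_eq_zero this).symm
  rw [Set.ncard_eq_toFinset_card _ (Set.toFinite R)]
  refine le_trans (Finset.card_le_card_of_injOn f ?_ ?_) (card_chains_le hdeg k v)
  · -- maps into chains
    intro u hu
    obtain ⟨p, hp, hd1, hdk, hfu⟩ := hfacts u hu
    rw [hfu]
    refine mem_chains k v _ (by simp) ?_ ?_
    · rw [List.range_succ_eq_map]
      simp only [List.map_cons, List.head?_cons, Option.some.injEq]
      rw [gfun_of_le p (by omega), p.getVert_zero]
    · show List.IsChain _ _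
      rw [List.isChain_iff_getElem]
      intro i hlen
      simp only [List.length_map, List.length_range] at hlen
      simp only [List.getElem_map, List.getElem_range]
      exact gfun_adj p hd1 i
  · -- injective
    intro u1 hu1 u2 hu2 hne
    obtain ⟨p1, hp1, hd11, hd1k, hf1⟩ := hfacts u1 hu1
    obtain ⟨p2, hp2, hd21, hd2k, hf2⟩ := hfacts u2 hu2
    rw [hf1, hf2] at hne
    have heq : ∀ i ≤ k, gfun p1 i = gfun p2 i := by
      intro i hi
      have := congrArg (fun l => l[i]?) hne
      simp only [List.getElem?_map, List.getElem?_range, hi] at this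
      simpa [List.getElem?_range, Nat.lt_succ_of_le hi] using this
    by_contra hcon
    have hdne : p1.length ≠ p2.length := by
      intro hdd
      apply hcon
      have e1 : gfun p1 p1.length = u1 := by
        rw [gfun_of_le p1 le_rfl, p1.getVert_length]
      have e2 : gfun p2 p2.length = u2 := by
        rw [gfun_of_le p2 le_rfl, p2.getVert_length]
      rw [← e1, ← e2, ← hdd]
      exact heq p1.length (le_trans (le_of_eq hdd) hd2k)
    rcases lt_or_gt_of_ne hdne with hlt | hgt
    · exact gfun_inj_aux p1 p2 hp2 hd11 hlt hd2k heq
    · exact gfun_inj_aux p2 p1 hp1 hd21 hgt hd1k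
        (fun i hi => (heq i hi).symm)

end counting

section pow

variable {V : Type*} {G : SimpleGraph V} {k : ℕ}

private lemma graphPow_adj {a b : V} :
    (graphPow G k).Adj a b ↔ a ≠ b ∧ ∃ w : G.Walk a b, w.length ≤ k := by
  classical
  constructor
  · rintro ⟨hne, h | h⟩
    · obtain ⟨w, -, hw⟩ := h; exact ⟨hne, w, hw⟩
    · obtain ⟨w, -, hw⟩ := h; exact ⟨hne, w.reverse, by simpa using hw⟩
  · rintro ⟨hne, w, hw⟩
    exact ⟨hne, Or.inl ⟨w.bypass, w.bypass_isPath, le_trans w.length_bypass_le hw⟩⟩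

private lemma reachable_induce_of_walk {A : Set V} :
    ∀ {a b : V} (w : G.Walk a b) (ha : a ∈ A) (hb : b ∈ A),
      (∀ t ∈ w.support, t ∈ A) →
      (G.induce A).Reachable ⟨a, ha⟩ ⟨b, hb⟩ := by
  intro a b w
  induction w with
  | nil => intro ha hb _; exact Reachable.refl _
  | @cons a c b hadj p ih =>
    intro ha hb hsup
    have hc : c ∈ A := hsup c (by simp [Walk.support_cons])
    refine Reachable.trans ?_ (ih hc hb fun t ht => hsup t (by simp [Walk.support_cons, ht]))
    exact Adj.reachable (by simpa using hadj)

end pow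

theorem stmt7 (q k : ℕ) (hq : 1 ≤ q) (hk : 1 ≤ k) (γ : ℝ) (hγ0 : 0 < γ) (hγ1 : γ < 1) :
    ∀ η : ℝ, 0 < η → ∃ n₀ : ℕ, ∀ n ≥ n₀,
      ∀ G : SimpleGraph (Fin n),
        (∀ v, (G.neighborSet v).ncard ≤ q) → Splittable G γ η →
          Splittable (graphPow G k) (γ / 2) η ∧
          (∀ v, ((graphPow G k).neighborSet v).ncard ≤ q ^ k) ∧
          Degenerate (graphPow G k) (q ^ k) := by
  intro η hη
  classical
  set c : ℝ := (q : ℝ) ^ k + 1 with hc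
  have hc1 : (1 : ℝ) ≤ c := by
    have : (0:ℝ) ≤ (q:ℝ)^k := by positivity
    linarith
  refine ⟨max 1 ⌈c ^ ((2:ℝ)/γ)⌉₊, ?_⟩
  intro n hn G hdeg hsplit
  have hn1 : 1 ≤ n := le_trans (le_max_left _ _) hn
  have hnpos : (0:ℝ) < (n:ℝ) := by exact_mod_cast hn1
  have hnc : c ^ ((2:ℝ)/γ) ≤ (n:ℝ) :=
    le_trans (Nat.le_ceil _) (by exact_mod_cast le_trans (le_max_right _ _) hn)
  have h0c : (0:ℝ) ≤ c := by linarith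
  have hqk : c ≤ (n:ℝ) ^ (γ/2 : ℝ) := by
    have hstep := Real.rpow_le_rpow (Real.rpow_nonneg h0c _) hnc
      (by positivity : (0:ℝ) ≤ γ/2)
    rwa [← Real.rpow_mul h0c, show (2:ℝ)/γ * (γ/2) = 1 by field_simp,
      Real.rpow_one] at hstep
  -- degree bound for the power graph
  have hpowdeg : ∀ v, ((graphPow G k).neighborSet v).ncard ≤ q ^ k := by
    intro v
    refine le_trans (Set.ncard_le_ncard ?_ (Set.toFinite _)) (reach_ncard_le hdeg v)
    intro u hu
    obtain ⟨hne, w, hw⟩ := graphPow_adj.mp hu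
    exact ⟨hne.symm, w, hw⟩
  refine ⟨?_, hpowdeg, ?_⟩
  · -- splittable
    obtain ⟨S, hScard, hScomp⟩ := hsplit
    simp only [Fintype.card_fin] at hScard hScomp
    set ballS : Fin n → Set (Fin n) := fun s => {u | ∃ w : G.Walk s u, w.length ≤ k}
      with hballS
    set S' : Finset (Fin n) := S.biUnion (fun s => (Set.toFinite (ballS s)).toFinset)
      with hS'
    have hball : ∀ s, (ballS s).ncard ≤ q ^ k + 1 := by
      intro s
      have hsub : ballS s ⊆ insert s {u | u ≠ s ∧ ∃ w : G.Walk s u, w.length ≤ k} := by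
        intro u hu
        by_cases h : u = s
        · exact h ▸ Set.mem_insert _ _
        · exact Set.mem_insert_of_mem _ ⟨h, hu⟩
      calc (ballS s).ncard ≤ _ := Set.ncard_le_ncard hsub (Set.toFinite _)
        _ ≤ {u | u ≠ s ∧ ∃ w : G.Walk s u, w.length ≤ k}.ncard + 1 :=
            Set.ncard_insert_le _ _
        _ ≤ q ^ k + 1 := by
            have := reach_ncard_le (k := k) hdeg s
            omega
    have hSsub : (↑S : Set (Fin n)) ⊆ ↑S' := by
      intro s hs
      simp only [hS', Finset.coe_biUnion, Set.mem_iUnion]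
      exact ⟨s, hs, by
        rw [Finset.mem_coe, Set.Finite.mem_toFinset]
        exact ⟨Walk.nil, by simp⟩⟩
    have hcc : ((↑S' : Set (Fin n))ᶜ) ⊆ ((↑S : Set (Fin n))ᶜ) :=
      Set.compl_subset_compl.mpr hSsub
    refine ⟨S', ?_, ?_⟩
    · -- cardinality of S'
      simp only [Fintype.card_fin]
      have hcard1 : S'.card ≤ S.card * (q ^ k + 1) := by
        calc S'.card ≤ ∑ s ∈ S, ((Set.toFinite (ballS s)).toFinset).card :=
              Finset.card_biUnion_le
          _ ≤ ∑ s ∈ S, (q ^ k + 1) := by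
              refine Finset.sum_le_sum fun s _ => ?_
              rw [← Set.ncard_eq_toFinset_card _ (Set.toFinite _)]
              exact hball s
          _ = S.card * (q ^ k + 1) := by rw [Finset.sum_const, smul_eq_mul]
      calc (S'.card : ℝ) ≤ (S.card : ℝ) * c := by
            rw [hc]; push_cast; exact_mod_cast (by exact_mod_cast hcard1 :
              (S'.card:ℝ) ≤ (S.card:ℝ) * ((q:ℝ)^k + 1))
        _ < (n:ℝ) ^ ((1:ℝ) - γ) * c := by
            refine mul_lt_mul_of_pos_right hScard (by linarith)
        _ ≤ (n:ℝ) ^ ((1:ℝ) - γ) * ((n:ℝ) ^ (γ/2 : ℝ)) :=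
            mul_le_mul_of_nonneg_left hqk (Real.rpow_nonneg hnpos.le _)
        _ = (n:ℝ) ^ ((1:ℝ) - γ/2) := by
            rw [← Real.rpow_add hnpos]
            congr 1
            ring
    · -- components are small
      simp only [Fintype.card_fin]
      -- the key step lemma
      have step : ∀ (a b : Fin n) (ha : a ∈ ((↑S' : Set (Fin n))ᶜ))
          (hb : b ∈ ((↑S' : Set (Fin n))ᶜ)), (graphPow G k).Adj a b →
          (G.induce ((↑S : Set (Fin n))ᶜ)).Reachable ⟨a, hcc ha⟩ ⟨b, hcc hb⟩ := by
        intro a b ha hb hadj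
        obtain ⟨hne, w, hwk⟩ := graphPow_adj.mp hadj
        refine reachable_induce_of_walk w (hcc ha) (hcc hb) ?_
        intro t ht
        simp only [Set.mem_compl_iff, Finset.mem_coe]
        intro htS
        obtain ⟨w1, w2, rfl⟩ := Walk.mem_support_iff_exists_append.mp ht
        have hlen := Walk.length_append w1 w2
        have hmem : a ∈ ballS t := ⟨w1.reverse, by rw [Walk.length_reverse]; omega⟩
        refine ha ?_
        simp only [hS', Finset.coe_biUnion, Set.mem_iUnion]
        exact ⟨t, htS, by rw [Finset.mem_coe, Set.Finite.mem_toFinset]; exact hmem⟩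
      have lift : ∀ (a b : ↥((↑S' : Set (Fin n))ᶜ)),
          ((graphPow G k).induce ((↑S' : Set (Fin n))ᶜ)).Reachable a b →
          (G.induce ((↑S : Set (Fin n))ᶜ)).Reachable ⟨a.1, hcc a.2⟩ ⟨b.1, hcc b.2⟩ := by
        intro a b hr
        obtain ⟨w⟩ := hr
        induction w with
        | nil => exact Reachable.refl _
        | @cons x y z hadj p ih =>
          exact Reachable.trans (step x.1 y.1 x.2 y.2 (by simpa using hadj)) ih
      intro c0
      induction c0 using SimpleGraph.ConnectedComponent.ind with
      | _ v₀ =>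
        set φ : ↥((↑S' : Set (Fin n))ᶜ) → ↥((↑S : Set (Fin n))ᶜ) :=
          Set.inclusion hcc with hφ
        have hφinj : Function.Injective φ := Set.inclusion_injective hcc
        have himg : φ '' ((((graphPow G k).induce ((↑S' : Set (Fin n))ᶜ)).connectedComponentMk
            v₀).supp) ⊆
            ((G.induce ((↑S : Set (Fin n))ᶜ)).connectedComponentMk (φ v₀)).supp := by
          rintro _ ⟨b, hb, rfl⟩
          rw [ConnectedComponent.mem_supp_iff] at hb ⊢
          exact ConnectedComponent.eq.mpr (lift b v₀ (ConnectedComponent.eq.mp hb))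
        calc ((((graphPow G k).induce ((↑S' : Set (Fin n))ᶜ)).connectedComponentMk
              v₀).supp.ncard : ℝ)
            = ((φ '' (((graphPow G k).induce ((↑S' : Set (Fin n))ᶜ)).connectedComponentMk
              v₀).supp).ncard : ℝ) := by
              rw [Set.ncard_image_of_injective _ hφinj]
          _ ≤ ((((G.induce ((↑S : Set (Fin n))ᶜ)).connectedComponentMk
              (φ v₀)).supp.ncard : ℕ) : ℝ) := by
              exact_mod_cast Set.ncard_le_ncard himg (Set.toFinite _)
          _ ≤ η * (n:ℝ) := hScomp _
  · -- degenerate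
    intro W hW
    obtain ⟨v, hv⟩ := hW
    exact ⟨v, hv, le_trans (Set.ncard_le_ncard (fun u hu => hu.2) (Set.toFinite _))
      (hpowdeg v)⟩
end

section
/- Let K ≥ 1 be an integer, 0 < γ < 1 and η > 0 reals. There exists an integer n₀ such that the following holds: if G is a (γ,η)-splittable graph of order n ≥ n₀ with vertex set [n], and k = (k₁,…,k_n) is a vector of integers with 1 ≤ k_i ≤ K for all i, then the blow-up G^k is (γ/2, K·η)-splittable. -/
/-- The blow-up of a graph `G` on `[n]`: vertex `i` is replaced by a clique of order `k i`,
and each edge `ij` is replaced by a complete bipartite graph between the cliques. -/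
def Blowup {n : ℕ} (G : SimpleGraph (Fin n)) (k : Fin n → ℕ) :
    SimpleGraph (Σ i : Fin n, Fin (k i)) :=
  SimpleGraph.fromRel (fun u v => u.1 = v.1 ∨ G.Adj u.1 v.1)

/-!
Delete the cliques of the vertices in the separator `S` of `G`. The projection of the blow-up
onto `G` sends every edge to an edge or to a single vertex, so each remaining component lies
over a single component of `G - S` and has at most `K` times its order. The new separator has
at most `K |S| < K n ^ (1 - γ) ≤ n ^ (1 - γ / 2)` vertices once `n ≥ K ^ (2 / γ)`.
-/

theorem Set.ncard_preimage_le_mul {α β : Type*} [Finite α] [Finite β] {f : β → α} {K : ℕ}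
    (hf : ∀ a, (f ⁻¹' {a}).ncard ≤ K) (t : Set α) : (f ⁻¹' t).ncard ≤ K * t.ncard := by
  classical
  have := Fintype.ofFinite α
  have := Fintype.ofFinite β
  simp only [Set.ncard_eq_toFinset_card']
  refine Finset.card_le_mul_card_image_of_maps_to (f := f) (by simp) K fun a _ => ?_
  calc ((f ⁻¹' t).toFinset.filter (f · = a)).card ≤ (f ⁻¹' {a}).toFinset.card :=
        Finset.card_le_card fun x => by simp +contextual
    _ ≤ K := by simpa only [Set.ncard_eq_toFinset_card'] using hf a

theorem Set.ncard_sigma_fst_preimage_singleton {ι : Type*} {X : ι → Type*} (i : ι) :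
    (Sigma.fst ⁻¹' {i} : Set (Σ i, X i)).ncard = Nat.card (X i) := by
  rw [← Set.range_sigmaMk, Set.ncard_range_of_injective sigma_mk_injective]

namespace SimpleGraph

variable {α β : Type*} {G : SimpleGraph α} {H : SimpleGraph β} {f : β → α}

def IsWeakHom (f : β → α) (H : SimpleGraph β) (G : SimpleGraph α) : Prop :=
  ∀ ⦃x y⦄, H.Adj x y → f x = f y ∨ G.Adj (f x) (f y)

theorem IsWeakHom.reachable (hf : IsWeakHom f H G) {x y : β} (h : H.Reachable x y) :
    G.Reachable (f x) (f y) := by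
  obtain ⟨w⟩ := h
  induction w with
  | nil => rfl
  | cons hadj _ ih =>
    rcases hf hadj with heq | hadj'
    · rwa [heq]
    · exact hadj'.reachable.trans ih

theorem IsWeakHom.restrictPreimage (hf : IsWeakHom f H G) (s : Set α) :
    IsWeakHom (s.restrictPreimage f) (H.induce (f ⁻¹' s)) (G.induce s) := fun _ _ hadj =>
  (hf hadj).imp Subtype.ext id

theorem IsWeakHom.exists_ncard_supp_le [Finite α] [Finite β] {K : ℕ} (hf : IsWeakHom f H G)
    (hfib : ∀ a, (f ⁻¹' {a}).ncard ≤ K) (s : Set α)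
    (c : (H.induce (f ⁻¹' s)).ConnectedComponent) :
    ∃ d : (G.induce s).ConnectedComponent, c.supp.ncard ≤ K * d.supp.ncard := by
  obtain ⟨v, rfl⟩ := c.exists_rep
  set g := s.restrictPreimage f
  refine ⟨(G.induce s).connectedComponentMk (g v), ?_⟩
  have hsupp : ((H.induce (f ⁻¹' s)).connectedComponentMk v).supp ⊆
      g ⁻¹' ((G.induce s).connectedComponentMk (g v)).supp := fun x hx =>
    ConnectedComponent.sound ((hf.restrictPreimage s).reachable (ConnectedComponent.exact hx))
  have hgfib : ∀ a, (g ⁻¹' {a}).ncard ≤ K := fun a => by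
    rw [← Set.ncard_image_of_injective _ Subtype.val_injective]
    refine (Set.ncard_le_ncard (fun x => ?_)).trans (hfib a)
    rintro ⟨y, hy, rfl⟩
    exact congrArg Subtype.val hy
  exact (Set.ncard_le_ncard hsupp).trans (Set.ncard_preimage_le_mul hgfib _)

theorem isWeakHom_sigma_fst_blowup {n : ℕ} (G : SimpleGraph (Fin n)) (k : Fin n → ℕ) :
    IsWeakHom Sigma.fst (Blowup G k) G := by
  rintro u v ⟨-, (h | h) | (h | h)⟩
  exacts [Or.inl h, Or.inr h, Or.inl h.symm, Or.inr h.symm]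

end SimpleGraph

open SimpleGraph

theorem Splittable.of_isWeakHom {α β : Type*} [Fintype α] [Fintype β] {G : SimpleGraph α}
    {H : SimpleGraph β} {f : β → α} {γ γ' η : ℝ} {K : ℕ} (hG : Splittable G γ η)
    (hf : IsWeakHom f H G) (hsurj : Function.Surjective f) (hfib : ∀ a, (f ⁻¹' {a}).ncard ≤ K)
    (hK : 0 < K) (hη : 0 ≤ η)
    (hcard : K * (Fintype.card α : ℝ) ^ (1 - γ) ≤ (Fintype.card β : ℝ) ^ (1 - γ')) :
    Splittable H γ' (K * η) := by
  classical
  obtain ⟨S, hS, hcomp⟩ := hG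
  refine ⟨(f ⁻¹' S).toFinset, ?_, ?_⟩
  · have hS' : (f ⁻¹' S).toFinset.card ≤ K * S.card := by
      simpa only [← Set.ncard_eq_toFinset_card', Set.ncard_coe_finset]
        using Set.ncard_preimage_le_mul hfib S
    calc ((f ⁻¹' S).toFinset.card : ℝ) ≤ K * S.card := by exact_mod_cast hS'
      _ < K * (Fintype.card α : ℝ) ^ (1 - γ) := by gcongr
      _ ≤ _ := hcard
  · rw [Set.coe_toFinset, ← Set.preimage_compl]
    intro c
    obtain ⟨d, hcd⟩ := hf.exists_ncard_supp_le hfib _ c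
    have hαβ : (Fintype.card α : ℝ) ≤ Fintype.card β := by
      exact_mod_cast Fintype.card_le_of_surjective f hsurj
    calc (c.supp.ncard : ℝ) ≤ K * d.supp.ncard := by exact_mod_cast hcd
      _ ≤ K * (η * Fintype.card α) := by gcongr; exact hcomp d
      _ ≤ K * η * Fintype.card β := by rw [mul_assoc]; gcongr

theorem Real.mul_rpow_one_sub_le_rpow {K n N γ : ℝ} (hK : 0 ≤ K) (hKn : K ^ (2 / γ) ≤ n)
    (hnN : n ≤ N) (hγ0 : 0 < γ) (hγ2 : γ < 2) : K * n ^ (1 - γ) ≤ N ^ (1 - γ / 2) := by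
  have hn : 0 ≤ n := (Real.rpow_nonneg hK _).trans hKn
  have hKle : K ≤ n ^ (γ / 2) := by
    rwa [← inv_div, Real.le_rpow_inv_iff_of_pos hK hn (by positivity)]
  calc K * n ^ (1 - γ) ≤ n ^ (γ / 2) * n ^ (1 - γ) := by gcongr
    _ = n ^ (1 - γ / 2) := by rw [← Real.rpow_add' hn (by linarith)]; ring_nf
    _ ≤ N ^ (1 - γ / 2) := by gcongr; linarith

theorem stmt9_general (K : ℕ) (γ η : ℝ) (hγ0 : 0 < γ) (hγ1 : γ < 1) (hη : 0 < η) :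
    ∃ n₀ : ℕ, ∀ n ≥ n₀, ∀ G : SimpleGraph (Fin n), Splittable G γ η →
      ∀ k : Fin n → ℕ, (∀ i, 1 ≤ k i ∧ k i ≤ K) →
        Splittable (Blowup G k) (γ / 2) ((K : ℝ) * η) := by
  refine ⟨max 1 ⌈(K : ℝ) ^ (2 / γ)⌉₊, fun n hn G hG k hk => ?_⟩
  have hK : 0 < K := (hk ⟨0, le_of_max_le_left hn⟩).1.trans (hk _).2
  have hsurj : Function.Surjective (Sigma.fst : (Σ i, Fin (k i)) → Fin n) :=
    fun i => ⟨⟨i, ⟨0, (hk i).1⟩⟩, rfl⟩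
  have hfib (i : Fin n) : (Sigma.fst ⁻¹' {i} : Set (Σ i, Fin (k i))).ncard ≤ K := by
    simpa [Set.ncard_sigma_fst_preimage_singleton] using (hk i).2
  refine hG.of_isWeakHom (isWeakHom_sigma_fst_blowup G k) hsurj hfib hK hη.le ?_
  rw [Fintype.card_fin]
  refine Real.mul_rpow_one_sub_le_rpow (Nat.cast_nonneg K) ?_ ?_ hγ0 (by linarith)
  · exact (Nat.le_ceil _).trans (by exact_mod_cast le_of_max_le_right hn)
  · exact_mod_cast Fintype.card_fin n ▸ Fintype.card_le_of_surjective _ hsurj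

theorem stmt9 (K : ℕ) (hK : 1 ≤ K) (γ η : ℝ) (hγ0 : 0 < γ) (hγ1 : γ < 1) (hη : 0 < η) :
    ∃ n₀ : ℕ, ∀ n ≥ n₀, ∀ G : SimpleGraph (Fin n), Splittable G γ η →
      ∀ k : Fin n → ℕ, (∀ i, 1 ≤ k i ∧ k i ≤ K) →
        Splittable (Blowup G k) (γ / 2) ((K : ℝ) * η) :=
  stmt9_general K γ η hγ0 hγ1 hη
end

section
/- Let q ≥ 0 be an integer, τ > 0 a real, and G a graph of order n with minimum degree δ(G) ≥ (1−τ)n. Then G contains (as a subgraph, i.e., there is an injective graph homomorphism into G from) every q-degenerate graph of order l with l ≤ (1−qτ)n. -/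
/-!
Embed `H` greedily. A `q`-degenerate graph has a vertex `v` with at most `q` neighbours; embed
`H - v` first. Every vertex of `G` misses at most `τ n` others, so the images of the neighbours of
`v` have at least `n - q τ n ≥ l` common neighbours, one of which is not among the `l - 1` vertices
already used and can serve as the image of `v`.
-/

/-- `H` is contained in `G` as a subgraph: there is an injective graph
homomorphism from `H` into `G`. -/
def Contains {α β : Type*} (G : SimpleGraph α) (H : SimpleGraph β) : Prop :=
  ∃ f : β → α, Function.Injective f ∧ ∀ ⦃u v⦄, H.Adj u v → G.Adj (f u) (f v)

open Finset

section

variable {V β : Type*}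

lemma Degenerate.exists_card_filter_adj_le {H : SimpleGraph β} [DecidableRel H.Adj] {q : ℕ}
    (hH : Degenerate H q) {W : Finset β} (hW : W.Nonempty) :
    ∃ v ∈ W, #{u ∈ W | H.Adj v u} ≤ q := by
  obtain ⟨v, hv, hcard⟩ := hH W hW
  refine ⟨v, hv, ?_⟩
  simp only [mem_coe] at hcard
  rwa [← coe_filter, Set.ncard_coe_finset] at hcard

lemma SimpleGraph.card_le_card_filter_forall_adj_add [Fintype V] [DecidableEq V]
    {G : SimpleGraph V} [DecidableRel G.Adj] {d : ℕ}
    (hd : ∀ x, Fintype.card V ≤ G.degree x + d) (S : Finset V) :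
    Fintype.card V ≤ #{w | ∀ s ∈ S, G.Adj s w} + #S * d := by
  set C : Finset V := {w | ∀ s ∈ S, G.Adj s w}
  have hcover : Cᶜ ⊆ S.biUnion fun s => (G.neighborFinset s)ᶜ := by
    intro w hw
    simpa [C] using hw
  calc Fintype.card V = #C + #Cᶜ := (card_add_card_compl C).symm
    _ ≤ #C + ∑ s ∈ S, #(G.neighborFinset s)ᶜ := by
      gcongr
      exact (card_le_card hcover).trans card_biUnion_le
    _ ≤ #C + #S * d := by
      gcongr
      rw [← smul_eq_mul]
      refine sum_le_card_nsmul _ _ _ fun s _ => ?_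
      rw [card_compl, G.card_neighborFinset_eq_degree]
      have := hd s
      omega

def EmbedsOn (G : SimpleGraph V) (H : SimpleGraph β) (f : β → V) (W : Set β) : Prop :=
  Set.InjOn f W ∧ ∀ ⦃a⦄, a ∈ W → ∀ ⦃b⦄, b ∈ W → H.Adj a b → G.Adj (f a) (f b)

lemma EmbedsOn.update [DecidableEq β] {G : SimpleGraph V} {H : SimpleGraph β} {f : β → V}
    {W : Set β} (hf : EmbedsOn G H f W) {v : β} (hv : v ∉ W) {w : V} (hw : w ∉ f '' W)
    (hadj : ∀ u ∈ W, H.Adj v u → G.Adj w (f u)) :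
    EmbedsOn G H (Function.update f v w) (insert v W) := by
  have heq : Set.EqOn (Function.update f v w) f W := fun u hu =>
    Function.update_of_ne (ne_of_mem_of_not_mem hu hv) _ _
  refine ⟨(Set.injOn_insert hv).2 ⟨hf.1.congr heq.symm, ?_⟩, ?_⟩
  · rwa [heq.image_eq, Function.update_self]
  · rintro a (rfl | ha) b (rfl | hb) hab
    · exact absurd hab H.irrefl
    · rw [Function.update_self, heq hb]
      exact hadj b hb hab
    · rw [Function.update_self, heq ha]
      exact (hadj a ha hab.symm).symm
    · rw [heq ha, heq hb]
      exact hf.2 ha hb hab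

lemma Degenerate.exists_embedsOn [Fintype V] {G : SimpleGraph V}
    [DecidableRel G.Adj] {H : SimpleGraph β} {q d : ℕ} (hH : Degenerate H q)
    (hd : ∀ x, Fintype.card V ≤ G.degree x + d) (f₀ : β → V) (W : Finset β)
    (hW : #W + q * d ≤ Fintype.card V) : ∃ f : β → V, EmbedsOn G H f W := by
  classical
  induction W using Finset.strongInduction with
  | H W ih =>
  obtain rfl | hne := W.eq_empty_or_nonempty
  · exact ⟨f₀, by simp [EmbedsOn]⟩
  obtain ⟨v, hvW, hdeg⟩ := hH.exists_card_filter_adj_le hne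
  have hcard_erase := card_erase_add_one hvW
  obtain ⟨f, hf⟩ := ih (W.erase v) (erase_ssubset hvW) (by omega)
  set S := {u ∈ W | H.Adj v u}.image f
  have hS : #S * d ≤ q * d := Nat.mul_le_mul_right d (card_image_le.trans hdeg)
  have hcommon := G.card_le_card_filter_forall_adj_add hd S
  obtain ⟨w, hwS, hwf⟩ := exists_mem_notMem_of_card_lt_card
    (s := (W.erase v).image f) (t := {w | ∀ s ∈ S, G.Adj s w})
    (card_image_le.trans_lt (by omega))
  have hext := hf.update (v := v) (w := w) (by simp) (by rwa [← coe_image, mem_coe])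
    fun u hu huv => ((mem_filter.1 hwS).2 (f u)
      (mem_image_of_mem f (mem_filter.2 ⟨mem_of_mem_erase hu, huv⟩))).symm
  rw [coe_erase, Set.insert_sdiff_singleton, Set.insert_eq_of_mem (mem_coe.2 hvW)] at hext
  exact ⟨_, hext⟩

theorem Degenerate.contains_of_card_add_le [Fintype V] {G : SimpleGraph V}
    [DecidableRel G.Adj] [Fintype β] {H : SimpleGraph β} {q d : ℕ} (hH : Degenerate H q)
    (hd : ∀ x, Fintype.card V ≤ G.degree x + d)
    (hcard : Fintype.card β + q * d ≤ Fintype.card V) : Contains G H := by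
  obtain ⟨e⟩ := Function.Embedding.nonempty_of_card_le (by omega : Fintype.card β ≤ Fintype.card V)
  obtain ⟨f, hinj, hadj⟩ := hH.exists_embedsOn hd e univ (by rwa [card_univ])
  rw [coe_univ] at hinj hadj
  exact ⟨f, Set.injOn_univ.1 hinj, fun a b hab => hadj trivial trivial hab⟩

end

lemma Nat.le_add_floor_of_sub_le {a b : ℕ} {t : ℝ} (h : (a : ℝ) - t ≤ b) : a ≤ b + ⌊t⌋₊ := by
  rcases le_total a b with hab | hab
  · omega
  · have := Nat.le_floor (a := t) (n := a - b) (by push_cast [hab]; linarith)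
    omega

theorem stmt11 (q n : ℕ) (τ : ℝ) (hτ : 0 < τ) (G : SimpleGraph (Fin n))
    (hδ : ∀ v, (1 - τ) * n ≤ ((G.neighborSet v).ncard : ℝ)) :
    ∀ l : ℕ, (l : ℝ) ≤ (1 - q * τ) * n →
      ∀ H : SimpleGraph (Fin l), Degenerate H q → Contains G H := by
  classical
  intro l hl H hH
  refine hH.contains_of_card_add_le (d := ⌊τ * n⌋₊) (fun x => ?_) ?_
  · have hdeg := hδ x
    rw [Set.ncard_eq_toFinset_card', ← SimpleGraph.neighborFinset_def,
      G.card_neighborFinset_eq_degree] at hdeg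
    rw [Fintype.card_fin]
    exact Nat.le_add_floor_of_sub_le (by linarith)
  · have hfloor := Nat.floor_le (by positivity : 0 ≤ τ * n)
    have hreal : (l : ℝ) + q * ⌊τ * n⌋₊ ≤ n := by nlinarith
    rw [Fintype.card_fin, Fintype.card_fin]
    exact_mod_cast hreal
end

section
/- Let 0 < τ < 1 be a real and let G be a graph of order n with more than (1−τ)n²/2 edges. Then G contains an induced subgraph G₀ with |G₀| > (1−√τ)·n and minimum degree δ(G₀) > (1−2√τ)·n. -/
set_option maxHeartbeats 1000000

theorem stmt13 (τ : ℝ) (hτ0 : 0 < τ) (hτ1 : τ < 1) (n : ℕ) (G : SimpleGraph (Fin n))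
    (he : (1 - τ) * (n : ℝ) ^ 2 / 2 < (G.edgeSet.ncard : ℝ)) :
    ∃ W : Finset (Fin n), (1 - Real.sqrt τ) * n < (W.card : ℝ) ∧
      ∀ v ∈ W,
        (1 - 2 * Real.sqrt τ) * n < (({u ∈ (↑W : Set (Fin n)) | G.Adj v u}).ncard : ℝ) := by
  classical
  set t := Real.sqrt τ with ht
  have ht2 : t ^ 2 = τ := Real.sq_sqrt hτ0.le
  have ht0 : 0 < t := Real.sqrt_pos.mpr hτ0
  have ht1 : t < 1 := by nlinarith
  -- n ≥ 1
  have hn1 : 1 ≤ n := by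
    rcases Nat.eq_zero_or_pos n with h0 | h; swap; · exact h
    subst h0
    rw [Set.eq_empty_of_isEmpty G.edgeSet] at he
    simp at he
  have hn1R : (1 : ℝ) ≤ n := by exact_mod_cast hn1
  have hnpos : (0 : ℝ) < n := by linarith
  -- edge count facts
  have hedge : G.edgeSet.ncard = G.edgeFinset.card := by
    rw [Set.ncard_eq_toFinset_card' G.edgeSet]
    congr 1
  have hchoose : (G.edgeFinset.card : ℝ) ≤ (n : ℝ) * ((n : ℝ) - 1) / 2 := by
    have h1 := G.card_edgeFinset_le_card_choose_two
    have h2 : ((Fintype.card (Fin n)).choose 2 : ℝ) = (n : ℝ) * ((n : ℝ) - 1) / 2 := by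
      rw [Fintype.card_fin, Nat.cast_choose_two]
    calc (G.edgeFinset.card : ℝ) ≤ ((Fintype.card (Fin n)).choose 2 : ℝ) := by exact_mod_cast h1
      _ = _ := h2
  have heR : (1 - τ) * (n : ℝ) ^ 2 / 2 < (G.edgeFinset.card : ℝ) := by rwa [hedge] at he
  have hτn : (n : ℝ) < τ * (n : ℝ) ^ 2 := by nlinarith
  have htn : 0 < t * (n : ℝ) := mul_pos ht0 hnpos
  -- key induction
  have key : ∀ k (W : Finset (Fin n)), W.card ≤ k →
      (1 - t) * n < (W.card : ℝ) →
      (1 - τ) * (n : ℝ) ^ 2 - 2 * ((n : ℝ) - W.card) * ((1 - 2 * t) * n) <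
        ((∑ u ∈ W, (W.filter (G.Adj u)).card : ℕ) : ℝ) →
      ∃ W' : Finset (Fin n), (1 - t) * n < (W'.card : ℝ) ∧
        ∀ v ∈ W', (1 - 2 * t) * n < (((W'.filter (G.Adj v)).card : ℕ) : ℝ) := by
    intro k
    induction k with
    | zero =>
      intro W hWk hWc _
      exfalso
      have h0 : W.card = 0 := Nat.le_zero.mp hWk
      rw [h0] at hWc
      have : 0 < (1 - t) * n := mul_pos (by linarith) hnpos
      simp at hWc
      linarith
    | succ k ih =>
      intro W hWk hWc hWe
      by_cases hgood : ∀ v ∈ W, (1 - 2 * t) * n < (((W.filter (G.Adj v)).card : ℕ) : ℝ)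
      · exact ⟨W, hWc, hgood⟩
      push_neg at hgood
      obtain ⟨v, hvW, hvdeg⟩ := hgood
      set W' := W.erase v with hW'
      have hcard' : W'.card = W.card - 1 := Finset.card_erase_of_mem hvW
      have hWpos : 1 ≤ W.card := Finset.card_pos.mpr ⟨v, hvW⟩
      have hcardR : ((W'.card : ℕ) : ℝ) = (W.card : ℝ) - 1 := by
        rw [hcard', Nat.cast_sub hWpos]; norm_num
      -- edge-sum inequality
      have hE : (∑ u ∈ W, (W.filter (G.Adj u)).card) ≤
          (∑ u ∈ W', (W'.filter (G.Adj u)).card) + 2 * (W.filter (G.Adj v)).card := by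
        have h1 : ∑ u ∈ W, (W.filter (G.Adj u)).card =
            (W.filter (G.Adj v)).card + ∑ u ∈ W', (W.filter (G.Adj u)).card :=
          (Finset.add_sum_erase W _ hvW).symm
        have h2 : ∀ u ∈ W', (W.filter (G.Adj u)).card ≤
            (W'.filter (G.Adj u)).card + (if G.Adj u v then 1 else 0) := by
          intro u hu
          by_cases hadj : G.Adj u v
          · have hsub : W.filter (G.Adj u) ⊆ insert v (W'.filter (G.Adj u)) := by
              intro w hw
              rcases eq_or_ne w v with rfl | hne
              · exact Finset.mem_insert_self _ _
              · refine Finset.mem_insert_of_mem ?_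
                rw [hW', Finset.filter_erase]
                exact Finset.mem_erase.mpr ⟨hne, hw⟩
            calc (W.filter (G.Adj u)).card ≤ (insert v (W'.filter (G.Adj u))).card :=
                  Finset.card_le_card hsub
              _ ≤ (W'.filter (G.Adj u)).card + 1 := Finset.card_insert_le _ _
              _ = (W'.filter (G.Adj u)).card + (if G.Adj u v then 1 else 0) := by
                  simp [hadj]
          · have heq : W'.filter (G.Adj u) = W.filter (G.Adj u) := by
              rw [hW', Finset.filter_erase, Finset.erase_eq_of_notMem]
              simp [hadj]
            simp [hadj, heq]
        have h3 : (∑ u ∈ W', (if G.Adj u v then 1 else 0)) ≤ (W.filter (G.Adj v)).card := by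
          rw [← Finset.card_filter]
          apply Finset.card_le_card
          intro u hu
          simp only [Finset.mem_filter] at hu ⊢
          exact ⟨Finset.mem_of_mem_erase hu.1, hu.2.symm⟩
        have h4 : (∑ u ∈ W', (W.filter (G.Adj u)).card) ≤
            (∑ u ∈ W', (W'.filter (G.Adj u)).card) +
              (∑ u ∈ W', (if G.Adj u v then 1 else 0)) := by
          rw [← Finset.sum_add_distrib]
          exact Finset.sum_le_sum h2
        omega
      have hEc : ((∑ u ∈ W, (W.filter (G.Adj u)).card : ℕ) : ℝ) ≤
          ((∑ u ∈ W', (W'.filter (G.Adj u)).card : ℕ) : ℝ) +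
            2 * (((W.filter (G.Adj v)).card : ℕ) : ℝ) := by
        exact_mod_cast hE
      -- invariant for W'
      have hWe' : (1 - τ) * (n : ℝ) ^ 2 - 2 * ((n : ℝ) - W'.card) * ((1 - 2 * t) * n) <
          ((∑ u ∈ W', (W'.filter (G.Adj u)).card : ℕ) : ℝ) := by
        rw [hcardR]
        have hring : 2 * ((n : ℝ) - ((W.card : ℝ) - 1)) * ((1 - 2 * t) * n) =
            2 * ((n : ℝ) - W.card) * ((1 - 2 * t) * n) + 2 * ((1 - 2 * t) * n) := by ring
        linarith
      by_cases hbig : (1 - t) * n < ((W'.card : ℕ) : ℝ)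
      · have hk : W'.card ≤ k := by omega
        exact ih W' hk hbig hWe'
      · exfalso
        push_neg at hbig
        have hε1 : (1 - t) * n - ((W'.card : ℕ) : ℝ) < 1 := by rw [hcardR]; linarith
        have hε0 : 0 ≤ (1 - t) * n - ((W'.card : ℕ) : ℝ) := by linarith
        have hEub : (∑ u ∈ W', (W'.filter (G.Adj u)).card) ≤ W'.card * W'.card := by
          calc (∑ u ∈ W', (W'.filter (G.Adj u)).card) ≤ ∑ _u ∈ W', W'.card :=
                Finset.sum_le_sum fun u _ => Finset.card_filter_le _ _
            _ = W'.card * W'.card := by rw [Finset.sum_const, smul_eq_mul]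
        have hEubR : ((∑ u ∈ W', (W'.filter (G.Adj u)).card : ℕ) : ℝ) ≤ ((W'.card : ℕ) : ℝ) * ((W'.card : ℕ) : ℝ) := by
          exact_mod_cast hEub
        have p1 : 0 ≤ ((1 - t) * n - ((W'.card : ℕ) : ℝ)) * (1 - ((1 - t) * n - ((W'.card : ℕ) : ℝ))) :=
          mul_nonneg hε0 (by linarith)
        have p2 : 0 ≤ ((1 - t) * n - ((W'.card : ℕ) : ℝ)) * (t * n) := mul_nonneg hε0 htn.le
        have htn2 : t ^ 2 * (n : ℝ) ^ 2 = τ * (n : ℝ) ^ 2 := by rw [ht2]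
        nlinarith [hWe', hEubR, p1, p2, htn2, hτn, hε1]
  -- apply to the full vertex set
  have hcu : ((Finset.univ : Finset (Fin n)).card : ℝ) = n := by
    rw [Finset.card_univ, Fintype.card_fin]
  have hnb : ∀ v : Fin n, (Finset.univ.filter (G.Adj v)) = G.neighborFinset v := by
    intro v; ext u; simp [SimpleGraph.mem_neighborFinset]
  have hEuniv : (∑ u ∈ (Finset.univ : Finset (Fin n)),
      ((Finset.univ : Finset (Fin n)).filter (G.Adj u)).card) = 2 * G.edgeFinset.card := by
    calc (∑ u ∈ (Finset.univ : Finset (Fin n)),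
          ((Finset.univ : Finset (Fin n)).filter (G.Adj u)).card)
        = ∑ u, G.degree u := by
          apply Finset.sum_congr rfl; intro u _
          rw [hnb u, SimpleGraph.degree]
      _ = 2 * G.edgeFinset.card := G.sum_degrees_eq_twice_card_edges
  obtain ⟨W, hWcard, hWdeg⟩ := key n Finset.univ (by rw [Finset.card_univ, Fintype.card_fin])
    (by rw [hcu]; nlinarith)
    (by
      rw [hcu, hEuniv]
      push_cast
      linarith)
  refine ⟨W, hWcard, fun v hv => ?_⟩
  have hset : {u ∈ (↑W : Set (Fin n)) | G.Adj v u} = ↑(W.filter (G.Adj v)) := by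
    ext u; simp
  rw [hset, Set.ncard_coe_finset]
  exact hWdeg v hv
end

section
/- For all integers k ≥ 2 and reals d > 0, λ > 0, there exists a real a > 0 with the following property: for every graph G and all disjoint nonempty sets U₁, U₂ ⊆ V(G) such that the number of edges of G between U₁ and U₂ is at least d·|U₁|·|U₂| and |U₁| is sufficiently large, there exists W ⊆ U₁ with |W| ≥ |U₁|^{1−λ} such that for every k-element subset X ⊆ W, the number of vertices of U₂ adjacent in G to all vertices of X is greater than a·|U₂|. -/
/-!
Dependent random choice. Pick a `t`-tuple of vertices of `U₂` uniformly at random and let `N` be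
its common neighbourhood in `U₁`. By convexity `𝔼|N| = ∑ᵤ (deg u / |U₂|)ᵗ ≥ |U₁| δᵗ`, while a
`k`-set whose common neighbourhood in `U₂` has at most `a|U₂|` vertices lies in `N` with
probability at most `aᵗ`; deleting one vertex of each such bad set from a good outcome leaves
`W`. With `a = δˢ` and `t` chosen so that `δᵗ ≈ |U₁|^(-λ/2)`, the expectation is at least
`2|U₁|^(1-λ)` and there is at most one bad set on average.
-/

open Finset

namespace Finset

variable {α β ι : Type*}

theorem sum_card_filter_forall_piFinset (A : Finset α) (B : Finset β) (r : α → β → Prop)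
    [DecidableRel r] (t : ℕ) :
    ∑ f ∈ Fintype.piFinset (fun _ : Fin t => B), #{a ∈ A | ∀ i, r a (f i)} =
      ∑ a ∈ A, #{b ∈ B | r a b} ^ t := by
  have hprod (a : α) (f : Fin t → β) :
      (if ∀ i, r a (f i) then 1 else 0) = ∏ i, if r a (f i) then 1 else 0 := by
    simp [prod_boole]
  simp_rw [card_filter, hprod]
  rw [sum_comm]
  refine sum_congr rfl fun a _ => ?_
  rw [sum_prod_piFinset B (fun _ b => if r a b then 1 else 0), prod_const, card_univ,
    Fintype.card_fin]

theorem exists_subset_card_le_add_card_forall_not_subset [DecidableEq α] (s : Finset α)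
    (𝒜 : Finset (Finset α)) (h𝒜 : ∀ X ∈ 𝒜, X.Nonempty) :
    ∃ t ⊆ s, #s ≤ #t + #𝒜 ∧ ∀ X ∈ 𝒜, ¬ X ⊆ t := by
  choose x hx using h𝒜
  set R := 𝒜.attach.image fun X => x X.1 X.2
  refine ⟨s \ R, sdiff_subset, (card_le_card_sdiff_add_card (t := R)).trans ?_, ?_⟩
  · exact Nat.add_le_add_left (card_image_le.trans_eq card_attach) _
  · intro X hX hXt
    exact (mem_sdiff.1 (hXt (hx X hX))).2 (mem_image_of_mem _ (mem_attach _ ⟨X, hX⟩))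

theorem card_mul_pow_le_sum_pow {K : Type*} [Field K] [LinearOrder K] [IsStrictOrderedRing K]
    {s : Finset ι} {f : ι → K} (hf : ∀ i ∈ s, 0 ≤ f i) {c : K} (hc : 0 ≤ c)
    (h : #s * c ≤ ∑ i ∈ s, f i) (t : ℕ) :
    #s * c ^ t ≤ ∑ i ∈ s, f i ^ t := by
  cases t with
  | zero => simp
  | succ t =>
    obtain rfl | hs := s.eq_empty_or_nonempty
    · simp
    have hs : (0 : K) < #s := by exact_mod_cast hs.card_pos
    refine le_of_mul_le_mul_left ?_ (pow_pos hs t)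
    calc (#s : K) ^ t * (#s * c ^ (t + 1)) = (#s * c) ^ (t + 1) := by ring
      _ ≤ (∑ i ∈ s, f i) ^ (t + 1) := by gcongr
      _ ≤ #s ^ t * ∑ i ∈ s, f i ^ (t + 1) := pow_sum_le_card_mul_sum_pow hf t

end Finset

namespace SimpleGraph

variable {α : Type*} (G : SimpleGraph α) [DecidableRel G.Adj]

theorem ncard_adj_eq_sum_card_neighbors (U₁ U₂ : Finset α) :
    {p : α × α | p.1 ∈ U₁ ∧ p.2 ∈ U₂ ∧ G.Adj p.1 p.2}.ncard =
      ∑ u ∈ U₁, #{v ∈ U₂ | G.Adj u v} := by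
  classical
  have hset : {p : α × α | p.1 ∈ U₁ ∧ p.2 ∈ U₂ ∧ G.Adj p.1 p.2} = G.interedges U₁ U₂ := by
    ext p
    simp [mem_interedges_iff]
  rw [hset, Set.ncard_coe_finset, interedges_def, card_filter, sum_product]
  simp_rw [card_filter]

theorem mul_le_sum_card_neighbors_div {U₁ U₂ : Finset α} (hU₂ : U₂.Nonempty) {c : ℝ}
    (h : c * #U₁ * #U₂ ≤ ({p : α × α | p.1 ∈ U₁ ∧ p.2 ∈ U₂ ∧ G.Adj p.1 p.2}.ncard : ℝ)) :
    #U₁ * c ≤ ∑ u ∈ U₁, (#{v ∈ U₂ | G.Adj u v} : ℝ) / #U₂ := by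
  rw [G.ncard_adj_eq_sum_card_neighbors] at h
  push_cast at h
  rw [← sum_div, le_div_iff₀ (by exact_mod_cast hU₂.card_pos)]
  linarith

theorem dependent_random_choice [DecidableEq α] (U₁ U₂ : Finset α) {k : ℕ} (hk : 0 < k)
    (hU₂ : U₂.Nonempty) {a : ℝ} (ha : 0 ≤ a) (t : ℕ) :
    ∃ W ⊆ U₁, ∑ u ∈ U₁, ((#{v ∈ U₂ | G.Adj u v} : ℝ) / #U₂) ^ t - (#U₁ : ℝ) ^ k * a ^ t ≤ #W ∧
      ∀ X ⊆ W, #X = k →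
        a * #U₂ < ({u ∈ (U₂ : Set α) | ∀ x ∈ X, G.Adj x u}.ncard : ℝ) := by
  set T := Fintype.piFinset fun _ : Fin t => U₂
  set N : (Fin t → α) → Finset α := fun f => {u ∈ U₁ | ∀ i, G.Adj u (f i)}
  set common : Finset α → Finset α := fun X => {v ∈ U₂ | ∀ x ∈ X, G.Adj x v}
  set bad := {X ∈ U₁.powersetCard k | (#(common X) : ℝ) ≤ a * #U₂}
  set B : (Fin t → α) → Finset (Finset α) := fun f => {X ∈ bad | ∀ i, ∀ x ∈ X, G.Adj x (f i)}
  have hm : (0 : ℝ) < #U₂ := by exact_mod_cast hU₂.card_pos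
  have hT : (#T : ℝ) = (#U₂ : ℝ) ^ t := by simp [T]
  have hN : ∑ f ∈ T, (#(N f) : ℝ) = ∑ u ∈ U₁, (#{v ∈ U₂ | G.Adj u v} : ℝ) ^ t := by
    exact_mod_cast sum_card_filter_forall_piFinset U₁ U₂ G.Adj t
  have hB : ∑ f ∈ T, (#(B f) : ℝ) ≤ #U₁ ^ k * (a * #U₂) ^ t := by
    have hcount : ∑ f ∈ T, (#(B f) : ℝ) = ∑ X ∈ bad, (#(common X) : ℝ) ^ t := by
      exact_mod_cast sum_card_filter_forall_piFinset bad U₂ (fun X v => ∀ x ∈ X, G.Adj x v) t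
    have hbad : (#bad : ℝ) ≤ #U₁ ^ k := by
      exact_mod_cast (card_filter_le _ _).trans
        ((card_powersetCard _ _).trans_le (Nat.choose_le_pow _ _))
    calc ∑ f ∈ T, (#(B f) : ℝ) = ∑ X ∈ bad, (#(common X) : ℝ) ^ t := hcount
      _ ≤ ∑ _X ∈ bad, (a * #U₂) ^ t :=
        sum_le_sum fun X hX => pow_le_pow_left₀ (Nat.cast_nonneg _) (mem_filter.1 hX).2 t
      _ = #bad * (a * #U₂) ^ t := by rw [sum_const, nsmul_eq_mul]
      _ ≤ #U₁ ^ k * (a * #U₂) ^ t := by gcongr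
  -- the random choice, as an average over all tuples `f ∈ T`
  obtain ⟨f, -, hf⟩ : ∃ f ∈ T,
      ∑ u ∈ U₁, ((#{v ∈ U₂ | G.Adj u v} : ℝ) / #U₂) ^ t - (#U₁ : ℝ) ^ k * a ^ t ≤
        #(N f) - #(B f) := by
    refine exists_le_of_sum_le (Fintype.piFinset_nonempty.2 fun _ => hU₂) ?_
    rw [sum_const, sum_sub_distrib, hN, nsmul_eq_mul, hT, mul_sub, mul_sum]
    simp_rw [div_pow, mul_div_cancel₀ _ (pow_pos hm t).ne']
    rw [mul_pow] at hB
    linarith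
  obtain ⟨W, hWN, hW, hWB⟩ := exists_subset_card_le_add_card_forall_not_subset (N f) (B f)
    fun X hX => card_pos.1 <| (mem_powersetCard.1 (mem_filter.1 (mem_filter.1 hX).1).1).2 ▸ hk
  refine ⟨W, hWN.trans (filter_subset _ _), hf.trans ?_, fun X hXW hXk => ?_⟩
  · have : (#(N f) : ℝ) ≤ #W + #(B f) := by exact_mod_cast hW
    linarith
  · have hXN : X ⊆ N f := hXW.trans hWN
    have hcommon : {u ∈ (U₂ : Set α) | ∀ x ∈ X, G.Adj x u} = common X := by ext; simp [common]
    rw [hcommon, Set.ncard_coe_finset]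
    by_contra! hXbad
    refine hWB X (mem_filter.2 ⟨mem_filter.2 ⟨mem_powersetCard.2 ⟨?_, hXk⟩, hXbad⟩, ?_⟩) hXW
    · exact hXN.trans (filter_subset _ _)
    · exact fun i x hx => (mem_filter.1 (hXN hx)).2 i

end SimpleGraph

theorem Real.rpow_one_sub_le_mul_sub_pow_mul_pow {n δ ε lam x : ℝ} {k s : ℕ} (hn : 1 ≤ n)
    (hε : 2 * ε ≤ 1) (hlam : 2 * ε ≤ lam) (hks : k ≤ ε * s) (hδ : 2 ≤ δ * n ^ ε)
    (hxl : δ * n ^ (-ε) ≤ x) (hxu : x ≤ n ^ (-ε)) :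
    n ^ (1 - lam) ≤ n * x - n ^ k * x ^ s := by
  have hn0 : 0 < n := by linarith
  have hnε : 0 < n ^ ε := Real.rpow_pos_of_pos hn0 ε
  have hδ0 : 0 < δ := pos_of_mul_pos_left (by linarith) hnε.le
  have hx0 : 0 ≤ x := le_trans (by positivity) hxl
  have hsmall : n ^ k * x ^ s ≤ 1 := by
    calc n ^ k * x ^ s ≤ n ^ (k : ℝ) * (n ^ (-ε)) ^ (s : ℝ) := by
          rw [Real.rpow_natCast, Real.rpow_natCast]
          gcongr
      _ = n ^ ((k : ℝ) - ε * s) := by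
          rw [← Real.rpow_mul hn0.le, sub_eq_add_neg, Real.rpow_add hn0, neg_mul]
      _ ≤ 1 := Real.rpow_le_one_of_one_le_of_nonpos hn (by linarith)
  have hsplit : n * n ^ (-ε) = n ^ ε * n ^ (1 - 2 * ε) := by
    rw [← Real.rpow_add hn0, show ε + (1 - 2 * ε) = 1 + -ε by ring, Real.rpow_add hn0,
      Real.rpow_one]
  have hlarge : 2 * n ^ (1 - 2 * ε) ≤ n * x :=
    calc 2 * n ^ (1 - 2 * ε) ≤ δ * n ^ ε * n ^ (1 - 2 * ε) := by gcongr
      _ = n * (δ * n ^ (-ε)) := by rw [mul_left_comm, hsplit, mul_assoc]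
      _ ≤ n * x := by gcongr
  have hmono : n ^ (1 - lam) ≤ n ^ (1 - 2 * ε) :=
    Real.rpow_le_rpow_of_exponent_le hn (by linarith)
  have hone : 1 ≤ n ^ (1 - 2 * ε) := Real.one_le_rpow hn (by linarith)
  linarith

theorem stmt15 (k : ℕ) (hk : 2 ≤ k) (d lam : ℝ) (hd : 0 < d) (hlam : 0 < lam) :
    ∃ a : ℝ, 0 < a ∧ ∃ N₀ : ℕ, ∀ (α : Type) (G : SimpleGraph α) (U₁ U₂ : Finset α),
      Disjoint U₁ U₂ → U₁.Nonempty → U₂.Nonempty → N₀ ≤ U₁.card →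
      d * U₁.card * U₂.card ≤
        ({p : α × α | p.1 ∈ U₁ ∧ p.2 ∈ U₂ ∧ G.Adj p.1 p.2}.ncard : ℝ) →
      ∃ W ⊆ U₁, (U₁.card : ℝ) ^ ((1 : ℝ) - lam) ≤ (W.card : ℝ) ∧
        ∀ X ⊆ W, X.card = k →
          a * U₂.card < (({u ∈ (↑U₂ : Set α) | ∀ x ∈ X, G.Adj x u}).ncard : ℝ) := by
  classical
  obtain ⟨ε, hε, hε1, hεlam⟩ : ∃ ε : ℝ, 0 < ε ∧ 2 * ε ≤ 1 ∧ 2 * ε ≤ lam :=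
    ⟨min lam 1 / 2, half_pos (lt_min hlam one_pos), by linarith [min_le_right lam 1],
      by linarith [min_le_left lam 1]⟩
  obtain ⟨δ, hδ, hδ2, hδd⟩ : ∃ δ : ℝ, 0 < δ ∧ δ ≤ 1 / 2 ∧ δ ≤ d :=
    ⟨min d (1 / 2), lt_min hd one_half_pos, min_le_right _ _, min_le_left _ _⟩
  set s := ⌈k / ε⌉₊
  refine ⟨δ ^ s, by positivity, ⌈(2 / δ) ^ ε⁻¹⌉₊, fun α G U₁ U₂ _ _ hU₂ hN hE => ?_⟩
  set n := (#U₁ : ℝ)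
  have hN' : (2 / δ) ^ ε⁻¹ ≤ n := (Nat.le_ceil _).trans (Nat.cast_le.2 hN)
  have hn : 1 ≤ n :=
    (Real.one_le_rpow (by rw [le_div_iff₀ hδ]; linarith) (by positivity)).trans hN'
  have hnε : 2 ≤ δ * n ^ ε := by
    have := Real.rpow_le_rpow (by positivity) hN' hε.le
    rwa [Real.rpow_inv_rpow (by positivity) hε.ne', div_le_iff₀' hδ] at this
  have hdeg : n * δ ≤ ∑ u ∈ U₁, (#{v ∈ U₂ | G.Adj u v} : ℝ) / #U₂ :=
    (by gcongr : n * δ ≤ n * d).trans (G.mul_le_sum_card_neighbors_div hU₂ hE)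
  obtain ⟨j, hj_lt, hj_le⟩ := exists_nat_pow_near_of_lt_one (Real.rpow_pos_of_pos (by linarith) _)
    (Real.rpow_le_one_of_one_le_of_nonpos hn (neg_nonpos.2 hε.le)) hδ (by linarith)
  obtain ⟨W, hWU, hW, hWX⟩ :=
    G.dependent_random_choice U₁ U₂ (k := k) (by omega) hU₂ (pow_nonneg hδ.le s) (j + 1)
  refine ⟨W, hWU, le_trans ?_ hW, hWX⟩
  calc n ^ (1 - lam) ≤ n * δ ^ (j + 1) - n ^ k * (δ ^ (j + 1)) ^ s := by
        refine Real.rpow_one_sub_le_mul_sub_pow_mul_pow hn hε1 hεlam ?_ hnε ?_ hj_lt.le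
        · exact (div_le_iff₀' hε).1 (Nat.le_ceil _)
        · rw [pow_succ']; gcongr
    _ = n * δ ^ (j + 1) - n ^ k * (δ ^ s) ^ (j + 1) := by rw [pow_right_comm]
    _ ≤ _ := by
        gcongr
        exact card_mul_pow_le_sum_pow (fun _ _ => by positivity) hδ.le hdeg _
end

section
/- There exists a constant C > 0 such that the following holds for every n ≥ 1. Let V₁,…,V₅ be a partition of [2n−1] into sets whose sizes are each ⌊(2n−1)/5⌋ or ⌈(2n−1)/5⌉, and let R be the graph on [2n−1] with uv ∈ E(R) if and only if u ∈ V_i, v ∈ V_j and i − j ≡ ±1 (mod 5). Then every n-element subset X ⊆ [2n−1] contains two disjoint subsets A, B ⊆ X such that every vertex of A is adjacent in R to every vertex of B and |A|·|B| ≥ n²/25 − C·n. Equivalently, the complementary graph B of R on [2n−1] has the property that every n-vertex induced subgraph of B contains two disjoint vertex sets A, B with |A|·|B| ≥ n²/25 − C·n and no B-edges between A and B. -/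
/-! Write `x i = |X ∩ Vᵢ|` (indices mod 5) with `x 0` maximal. As `x 2, x 3 ≤ x 0`, we have
`x 2 * x 3 ≥ x 0 * (x 2 + x 3) - x 0 ^ 2`, hence
`x 0 * (x 1 + x 4) + x 2 * (x 1 + x 3) ≥ x 0 * (n - 2 * x 0)`. Balancedness of the classes gives
`n / 5 ≤ x 0 ≤ (2n + 3) / 5`, and on that range `x 0 * (n - 2 * x 0) ≥ 2 * (n² / 25 - 5n)`.
So for `i = 0` or `i = 2` the sets `X ∩ Vᵢ` and `X ∩ (Vᵢ₋₁ ∪ Vᵢ₊₁)` are as required. -/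

/-- The red graph of the 5-cycle blow-up coloring: given an assignment `P` of vertices to
the five classes `V₁, …, V₅`, vertices `u, v` are adjacent iff their classes differ by
`±1 (mod 5)`. -/
def cycleBlowup {N : ℕ} (P : Fin N → Fin 5) : SimpleGraph (Fin N) :=
  SimpleGraph.fromRel (fun u v =>
    ((P u : ℕ) : ZMod 5) - ((P v : ℕ) : ZMod 5) = 1 ∨
    ((P u : ℕ) : ZMod 5) - ((P v : ℕ) : ZMod 5) = -1)

open Finset

lemma cycleBlowup_adj_of_eq_add_one_or_eq_sub_one {N : ℕ} (P : Fin N → Fin 5) {u v : Fin N}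
    (h : P v = P u + 1 ∨ P v = P u - 1) : (cycleBlowup P).Adj u v := by
  have hne : u ≠ v := by
    rintro rfl
    revert h
    generalize P u = i
    decide +revert
  rw [cycleBlowup, SimpleGraph.fromRel_adj]
  refine ⟨hne, Or.inl ?_⟩
  revert h
  generalize P u = i
  generalize P v = j
  decide +revert

lemma SimpleGraph.disjoint_of_forall_adj {V : Type*} (G : SimpleGraph V) {A B : Finset V}
    (h : ∀ a ∈ A, ∀ b ∈ B, G.Adj a b) : Disjoint A B :=
  Finset.disjoint_left.2 fun _ hA hB => G.irrefl (h _ hA _ hB)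

lemma mul_sub_le_mul_add_mul {a b c d e : ℝ} (hb : 0 ≤ b) (hc : 0 ≤ c) (hca : c ≤ a)
    (hda : d ≤ a) : a * (b + c + d + e - a) ≤ a * (b + e) + c * (b + d) := by
  nlinarith [mul_nonneg hc hb, mul_nonneg (sub_nonneg.2 hca) (sub_nonneg.2 hda)]

lemma two_mul_sub_le_mul_sub_two_mul {n a : ℝ} (hn : 1 ≤ n) (hlo : n ≤ 5 * a)
    (hhi : 5 * a ≤ 2 * n + 3) : 2 * (n ^ 2 / 25 - 5 * n) ≤ a * (n - 2 * a) := by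
  nlinarith [mul_nonneg (sub_nonneg.2 hlo) (sub_nonneg.2 hhi),
    mul_nonneg (sub_nonneg.2 hhi) (by linarith : (0 : ℝ) ≤ n + 6)]

lemma Fin.sum_univ_five_add {M : Type*} [AddCommMonoid M] (x : Fin 5 → M) (i : Fin 5) :
    ∑ j, x j = x i + x (i + 1) + x (i + 2) + x (i + 3) + x (i - 1) := by
  rw [← Equiv.sum_comp (Equiv.addLeft i) x, Fin.sum_univ_five]
  have h4 : ∀ j : Fin 5, j + 4 = j - 1 := by decide
  simp [h4]

lemma exists_le_mul_add_neighbors {n : ℝ} (x : Fin 5 → ℝ) (hn : 1 ≤ n) (hx : ∀ i, 0 ≤ x i)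
    (hcap : ∀ i, 5 * x i ≤ 2 * n + 3) (hsum : ∑ i, x i = n) :
    ∃ i, n ^ 2 / 25 - 5 * n ≤ x i * (x (i + 1) + x (i - 1)) := by
  obtain ⟨i, -, hmax⟩ := exists_max_image univ x univ_nonempty
  have hlo : n ≤ 5 * x i := by
    simpa [hsum] using sum_le_card_nsmul univ x (x i) fun j _ => hmax j (mem_univ j)
  have hpair := mul_sub_le_mul_add_mul (e := x (i - 1)) (hx (i + 1)) (hx (i + 2))
    (hmax _ (mem_univ _)) (hmax (i + 3) (mem_univ _))
  have hquad := two_mul_sub_le_mul_sub_two_mul hn hlo (hcap i)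
  have hrot := Fin.sum_univ_five_add x i
  have h21 : ∀ j : Fin 5, j + 2 - 1 = j + 1 := by decide
  have h23 : ∀ j : Fin 5, j + 2 + 1 = j + 3 := by decide
  by_contra! hcon
  have h0 := hcon i
  have h2 := hcon (i + 2)
  rw [h21, h23] at h2
  nlinarith

lemma Finset.card_filter_eq_or_eq {α β : Type*} [DecidableEq α] [DecidableEq β] (s : Finset α)
    (f : α → β) {b c : β} (hbc : b ≠ c) :
    #(s.filter fun a => f a = b ∨ f a = c) = #(s.filter (f · = b)) + #(s.filter (f · = c)) := by
  rw [filter_or, card_union_of_disjoint]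
  exact disjoint_filter.2 fun a _ hb hc => hbc (hb.symm.trans hc)

theorem stmt19 :
    ∃ C : ℝ, 0 < C ∧ ∀ n : ℕ, 1 ≤ n → ∀ P : Fin (2 * n - 1) → Fin 5,
      (∀ j : Fin 5,
        (Finset.univ.filter (fun v => P v = j)).card = (2 * n - 1) / 5 ∨
        (Finset.univ.filter (fun v => P v = j)).card = (2 * n - 1 + 4) / 5) →
      ∀ X : Finset (Fin (2 * n - 1)), X.card = n →
        ∃ A B : Finset (Fin (2 * n - 1)), A ⊆ X ∧ B ⊆ X ∧ Disjoint A B ∧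
          (∀ a ∈ A, ∀ b ∈ B, (cycleBlowup P).Adj a b) ∧
          (n : ℝ) ^ 2 / 25 - C * n ≤ (A.card : ℝ) * B.card := by
  refine ⟨5, by norm_num, fun n hn P hP X hX => ?_⟩
  have hsum : ∑ j, #(X.filter (P · = j)) = n :=
    (card_eq_sum_card_fiberwise fun v _ => mem_univ (P v)).symm.trans hX
  have hcap : ∀ j, 5 * #(X.filter (P · = j)) ≤ 2 * n + 3 := fun j => by
    have := card_le_card (filter_subset_filter (P · = j) (subset_univ X))
    rcases hP j with h | h <;> omega
  obtain ⟨i, hi⟩ := exists_le_mul_add_neighbors (n := n) (fun j => (#(X.filter (P · = j)) : ℝ))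
    (by exact_mod_cast hn) (fun _ => by positivity) (fun j => by exact_mod_cast hcap j)
    (by exact_mod_cast hsum)
  have hadj : ∀ a ∈ X.filter (P · = i), ∀ b ∈ X.filter (fun v => P v = i + 1 ∨ P v = i - 1),
      (cycleBlowup P).Adj a b := by
    simp only [mem_filter]
    rintro a ⟨-, rfl⟩ b ⟨-, hb⟩
    exact cycleBlowup_adj_of_eq_add_one_or_eq_sub_one P hb
  refine ⟨_, _, filter_subset _ _, filter_subset _ _, (cycleBlowup P).disjoint_of_forall_adj hadj,
    hadj, ?_⟩
  have hne : ∀ j : Fin 5, j + 1 ≠ j - 1 := by decide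
  rw [card_filter_eq_or_eq X P (hne i)]
  push_cast
  exact hi
end
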